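/- arXiv:1606.05236 — 10 statements merged into one kernel-verified Lean document; each statement's English description precedes it below -/
import Mathlib

section
/- If $\{t_n\}_{n\in\mathbb{N}}$ is a positive nonincreasing sequence of real numbers with limit zero, then the series $\sum_{n=1}^{\infty} (t_n - t_{n+1})/t_{n+1}$ diverges to infinity. -/
open Filter

/-- If $\{t_n\}$ is a positive nonincreasing sequence with limit zero, then
$\sum_{n=1}^\infty (t_n - t_{n+1})/t_{n+1} = \infty$. -/
theorem stmt_0 (t : ℕ → ℝ) (hpos : ∀ n, 0 < t n) (hanti : ∀ n, t (n + 1) ≤ t n)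
    (hlim : Tendsto t atTop (nhds 0)) :
    Tendsto (fun k => ∑ n ∈ Finset.range k, (t n - t (n + 1)) / t (n + 1)) atTop atTop := by
  have hlog : Tendsto (fun k => Real.log (t 0) - Real.log (t k)) atTop atTop := by
    have h0 : Tendsto t atTop (nhdsWithin 0 (Set.Ioi 0)) :=
      tendsto_nhdsWithin_of_tendsto_nhds_of_eventually_within _ hlim
        (Eventually.of_forall fun n => hpos n)
    have := (Real.tendsto_log_nhdsGT_zero).comp h0
    exact tendsto_atTop_add_const_left _ _ (tendsto_neg_atTop_iff.mpr this)
  refine tendsto_atTop_mono ?_ hlog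
  intro k
  have hsum : ∑ n ∈ Finset.range k, (Real.log (t n) - Real.log (t (n + 1)))
      = Real.log (t 0) - Real.log (t k) := by
    have := Finset.sum_range_sub' (fun n => Real.log (t n)) k
    simpa using this
  rw [← hsum]
  apply Finset.sum_le_sum
  intro n _
  have hb := hpos (n + 1)
  have hdiv : Real.log (t n) - Real.log (t (n + 1)) = Real.log (t n / t (n + 1)) := by
    rw [Real.log_div (hpos n).ne' hb.ne']
  rw [hdiv, sub_div, div_self hb.ne']
  have := Real.log_le_sub_one_of_pos (div_pos (hpos n) hb)
  linarith
end

section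
/- Let $\{f_i\}_{i\in\mathbb{N}}$ be an orthonormal sequence in a Hilbert space $\mathcal{H}$, and let $\{\alpha_i\}_{i\in\mathbb{N}}$ be a sequence in $[0,1]$. Define $\tilde{e}_1 = f_1$ and inductively $e_i = \sqrt{\alpha_i}\,\tilde{e}_i + \sqrt{1-\alpha_i}\, f_{i+1}$ and $\tilde{e}_{i+1} = \sqrt{1-\alpha_i}\,\tilde{e}_i - \sqrt{\alpha_i}\, f_{i+1}$. If $\prod_{i=n}^{\infty}(1-\alpha_i) = 0$ for each $n \in \mathbb{N}$, then $\{e_i\}_{i\in\mathbb{N}}$ is an orthonormal basis for the closed linear span of $\{f_i\}_{i\in\mathbb{N}}$, and each $e_k$ lies in the (algebraic) linear span of $\{f_i\}_{i\in\mathbb{N}}$. -/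
open Filter
open scoped InnerProductSpace


lemma aux_fte {H : Type*} [NormedAddCommGroup H] [InnerProductSpace ℂ H]
    (f : ℕ → H) (hf : Orthonormal ℂ f) (α : ℕ → ℝ)
    (te : ℕ → H) (hte0 : te 0 = f 0)
    (hte : ∀ i, te (i+1) = (Real.sqrt (1 - α i) : ℂ) • te i - (Real.sqrt (α i) : ℂ) • f (i+1)) :
    ∀ n j, n < j → ⟪f j, te n⟫_ℂ = 0 := by
  intro n
  induction n with
  | zero => intro j hj; rw [hte0]; exact hf.2 (by omega)
  | succ n ih =>
    intro j hj
    rw [hte n, inner_sub_right, inner_smul_right, inner_smul_right,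
      ih j (by omega), hf.2 (show j ≠ n+1 by omega)]
    ring

lemma aux_tef {H : Type*} [NormedAddCommGroup H] [InnerProductSpace ℂ H]
    (f : ℕ → H) (hf : Orthonormal ℂ f) (α : ℕ → ℝ)
    (te : ℕ → H) (hte0 : te 0 = f 0)
    (hte : ∀ i, te (i+1) = (Real.sqrt (1 - α i) : ℂ) • te i - (Real.sqrt (α i) : ℂ) • f (i+1)) :
    ∀ n j, n < j → ⟪te n, f j⟫_ℂ = 0 := by
  intro n j hj
  rw [← inner_conj_symm, aux_fte f hf α te hte0 hte n j hj, map_zero]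

lemma aux_tete {H : Type*} [NormedAddCommGroup H] [InnerProductSpace ℂ H]
    (f : ℕ → H) (hf : Orthonormal ℂ f)
    (α : ℕ → ℝ) (hα : ∀ i, α i ∈ Set.Icc (0 : ℝ) 1)
    (te : ℕ → H) (hte0 : te 0 = f 0)
    (hte : ∀ i, te (i+1) = (Real.sqrt (1 - α i) : ℂ) • te i - (Real.sqrt (α i) : ℂ) • f (i+1)) :
    ∀ n, ⟪te n, te n⟫_ℂ = 1 := by
  intro n
  induction n with
  | zero =>
    rw [hte0]
    simpa using orthonormal_iff_ite.mp hf 0 0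
  | succ n ih =>
    have h1 : ⟪te n, f (n+1)⟫_ℂ = 0 := aux_tef f hf α te hte0 hte n (n+1) (by omega)
    have h2 : ⟪f (n+1), te n⟫_ℂ = 0 := aux_fte f hf α te hte0 hte n (n+1) (by omega)
    have h3 : ⟪f (n+1), f (n+1)⟫_ℂ = 1 := by
      simpa using orthonormal_iff_ite.mp hf (n+1) (n+1)
    rw [hte n]
    rw [inner_sub_left, inner_sub_right, inner_sub_right]
    simp only [inner_smul_left, inner_smul_right, Complex.conj_ofReal, h1, h2, h3, ih,
      mul_one, mul_zero, sub_zero, zero_sub]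
    rw [← Complex.ofReal_mul, ← Complex.ofReal_mul,
      Real.mul_self_sqrt (by linarith [(hα n).2]), Real.mul_self_sqrt (hα n).1]
    push_cast
    ring

lemma aux_ef {H : Type*} [NormedAddCommGroup H] [InnerProductSpace ℂ H]
    (f : ℕ → H) (hf : Orthonormal ℂ f) (α : ℕ → ℝ)
    (e te : ℕ → H) (hte0 : te 0 = f 0)
    (he : ∀ i, e i = (Real.sqrt (α i) : ℂ) • te i + (Real.sqrt (1 - α i) : ℂ) • f (i + 1))
    (hte : ∀ i, te (i+1) = (Real.sqrt (1 - α i) : ℂ) • te i - (Real.sqrt (α i) : ℂ) • f (i+1)) :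
    ∀ n m, n + 1 < m → ⟪e n, f m⟫_ℂ = 0 := by
  intro n m hm
  rw [he n, inner_add_left, inner_smul_left, inner_smul_left,
    aux_tef f hf α te hte0 hte n m (by omega), hf.2 (show n+1 ≠ m by omega)]
  ring

lemma aux_ete {H : Type*} [NormedAddCommGroup H] [InnerProductSpace ℂ H]
    (f : ℕ → H) (hf : Orthonormal ℂ f)
    (α : ℕ → ℝ) (hα : ∀ i, α i ∈ Set.Icc (0 : ℝ) 1)
    (e te : ℕ → H) (hte0 : te 0 = f 0)
    (he : ∀ i, e i = (Real.sqrt (α i) : ℂ) • te i + (Real.sqrt (1 - α i) : ℂ) • f (i + 1))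
    (hte : ∀ i, te (i+1) = (Real.sqrt (1 - α i) : ℂ) • te i - (Real.sqrt (α i) : ℂ) • f (i+1)) :
    ∀ n m, n < m → ⟪e n, te m⟫_ℂ = 0 := by
  intro n m
  induction m with
  | zero => omega
  | succ m ih =>
    intro hm
    rcases Nat.lt_or_ge n m with h | h
    · -- m > n : use recursion
      rw [hte m, inner_sub_right, inner_smul_right, inner_smul_right, ih h,
        aux_ef f hf α e te hte0 he hte n (m+1) (by omega)]
      ring
    · -- n = m
      have hnm : n = m := by omega
      subst hnm
      have h1 : ⟪te n, f (n+1)⟫_ℂ = 0 := aux_tef f hf α te hte0 hte n (n+1) (by omega)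
      have h2 : ⟪f (n+1), te n⟫_ℂ = 0 := aux_fte f hf α te hte0 hte n (n+1) (by omega)
      have h3 : ⟪f (n+1), f (n+1)⟫_ℂ = 1 := by
        simpa using orthonormal_iff_ite.mp hf (n+1) (n+1)
      have h4 := aux_tete f hf α hα te hte0 hte n
      rw [he n, hte n, inner_add_left, inner_sub_right, inner_sub_right]
      simp only [inner_smul_left, inner_smul_right, Complex.conj_ofReal, h1, h2, h3, h4,
        mul_one, mul_zero, sub_zero, zero_sub]
      ring

lemma aux_ee {H : Type*} [NormedAddCommGroup H] [InnerProductSpace ℂ H]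
    (f : ℕ → H) (hf : Orthonormal ℂ f)
    (α : ℕ → ℝ) (hα : ∀ i, α i ∈ Set.Icc (0 : ℝ) 1)
    (e te : ℕ → H) (hte0 : te 0 = f 0)
    (he : ∀ i, e i = (Real.sqrt (α i) : ℂ) • te i + (Real.sqrt (1 - α i) : ℂ) • f (i + 1))
    (hte : ∀ i, te (i+1) = (Real.sqrt (1 - α i) : ℂ) • te i - (Real.sqrt (α i) : ℂ) • f (i+1)) :
    Orthonormal ℂ e := by
  rw [orthonormal_iff_ite]
  have key : ∀ n m, n < m → ⟪e n, e m⟫_ℂ = 0 := by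
    intro n m hm
    rw [he m, inner_add_right, inner_smul_right, inner_smul_right,
      aux_ete f hf α hα e te hte0 he hte n m hm,
      aux_ef f hf α e te hte0 he hte n (m+1) (by omega)]
    ring
  intro i j
  rcases lt_trichotomy i j with h | h | h
  · rw [key i j h, if_neg (by omega)]
  · subst h
    rw [if_pos rfl]
    have h1 : ⟪te i, f (i+1)⟫_ℂ = 0 := aux_tef f hf α te hte0 hte i (i+1) (by omega)
    have h2 : ⟪f (i+1), te i⟫_ℂ = 0 := aux_fte f hf α te hte0 hte i (i+1) (by omega)
    have h3 : ⟪f (i+1), f (i+1)⟫_ℂ = 1 := by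
      simpa using orthonormal_iff_ite.mp hf (i+1) (i+1)
    have h4 := aux_tete f hf α hα te hte0 hte i
    rw [he i, inner_add_left, inner_add_right, inner_add_right]
    simp only [inner_smul_left, inner_smul_right, Complex.conj_ofReal, h1, h2, h3, h4,
      mul_one, mul_zero, add_zero, zero_add]
    rw [← Complex.ofReal_mul, ← Complex.ofReal_mul,
      Real.mul_self_sqrt (hα i).1, Real.mul_self_sqrt (by linarith [(hα i).2])]
    push_cast; ring
  · rw [← inner_conj_symm, key j i h, map_zero, if_neg (by omega)]

-- te n ∈ span of range f
lemma aux_te_span {H : Type*} [NormedAddCommGroup H] [InnerProductSpace ℂ H]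
    (f : ℕ → H) (α : ℕ → ℝ) (te : ℕ → H) (hte0 : te 0 = f 0)
    (hte : ∀ i, te (i+1) = (Real.sqrt (1 - α i) : ℂ) • te i - (Real.sqrt (α i) : ℂ) • f (i+1)) :
    ∀ n, te n ∈ Submodule.span ℂ (Set.range f) := by
  intro n
  induction n with
  | zero => rw [hte0]; exact Submodule.subset_span ⟨0, rfl⟩
  | succ n ih =>
    rw [hte n]
    exact sub_mem (Submodule.smul_mem _ _ ih)
      (Submodule.smul_mem _ _ (Submodule.subset_span ⟨n+1, rfl⟩))

-- inverse rotation : te n = √(1-αₙ) • te (n+1) + √αₙ • e n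
lemma aux_terot {H : Type*} [NormedAddCommGroup H] [InnerProductSpace ℂ H]
    (f : ℕ → H) (α : ℕ → ℝ) (hα : ∀ i, α i ∈ Set.Icc (0 : ℝ) 1)
    (e te : ℕ → H)
    (he : ∀ i, e i = (Real.sqrt (α i) : ℂ) • te i + (Real.sqrt (1 - α i) : ℂ) • f (i + 1))
    (hte : ∀ i, te (i+1) = (Real.sqrt (1 - α i) : ℂ) • te i - (Real.sqrt (α i) : ℂ) • f (i+1)) :
    ∀ n, te n = (Real.sqrt (1 - α n) : ℂ) • te (n+1) + (Real.sqrt (α n) : ℂ) • e n := by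
  intro n
  have key : ((Real.sqrt (1 - α n) : ℂ)) * (Real.sqrt (1 - α n)) +
      ((Real.sqrt (α n) : ℂ)) * (Real.sqrt (α n)) = 1 := by
    rw [← Complex.ofReal_mul, ← Complex.ofReal_mul,
      Real.mul_self_sqrt (by linarith [(hα n).2]), Real.mul_self_sqrt (hα n).1]
    push_cast; ring
  rw [hte n, he n]
  match_scalars
  · linear_combination -key
  · ring

-- inner recursion: for j ≠ n+1, ⟪te (n+1), f j⟫ = √(1-αₙ) * ⟪te n, f j⟫
lemma aux_rec {H : Type*} [NormedAddCommGroup H] [InnerProductSpace ℂ H]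
    (f : ℕ → H) (hf : Orthonormal ℂ f) (α : ℕ → ℝ) (te : ℕ → H)
    (hte : ∀ i, te (i+1) = (Real.sqrt (1 - α i) : ℂ) • te i - (Real.sqrt (α i) : ℂ) • f (i+1)) :
    ∀ n j, j ≠ n + 1 → ⟪te (n+1), f j⟫_ℂ = (Real.sqrt (1 - α n) : ℂ) * ⟪te n, f j⟫_ℂ := by
  intro n j hj
  rw [hte n, inner_sub_left, inner_smul_left, inner_smul_left,
    hf.2 (show n+1 ≠ j by omega), Complex.conj_ofReal]
  ring

-- main induction: f j - ⟪te n, f j⟫ • te n ∈ span e for j ≤ n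
lemma aux_g {H : Type*} [NormedAddCommGroup H] [InnerProductSpace ℂ H]
    (f : ℕ → H) (hf : Orthonormal ℂ f)
    (α : ℕ → ℝ) (hα : ∀ i, α i ∈ Set.Icc (0 : ℝ) 1)
    (e te : ℕ → H) (hte0 : te 0 = f 0)
    (he : ∀ i, e i = (Real.sqrt (α i) : ℂ) • te i + (Real.sqrt (1 - α i) : ℂ) • f (i + 1))
    (hte : ∀ i, te (i+1) = (Real.sqrt (1 - α i) : ℂ) • te i - (Real.sqrt (α i) : ℂ) • f (i+1)) :
    ∀ j n, j ≤ n → f j - ⟪te n, f j⟫_ℂ • te n ∈ Submodule.span ℂ (Set.range e) := by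
  intro j n
  induction n with
  | zero =>
    intro hj
    have hj0 : j = 0 := by omega
    subst hj0
    have h1 : ⟪te 0, f 0⟫_ℂ = 1 := by
      rw [hte0]; simpa using orthonormal_iff_ite.mp hf 0 0
    rw [h1, hte0, one_smul, sub_self]
    exact zero_mem _
  | succ n ih =>
    intro hj
    rcases Nat.lt_or_ge n j with h | h
    · -- j = n+1 : base of recursion at level j
      have hj1 : j = n + 1 := by omega
      subst hj1
      have h1 : ⟪te (n+1), f (n+1)⟫_ℂ = -(Real.sqrt (α n) : ℂ) := by
        rw [hte n, inner_sub_left, inner_smul_left, inner_smul_left,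
          aux_tef f hf α te hte0 hte n (n+1) (by omega), Complex.conj_ofReal,
          Complex.conj_ofReal]
        have h3 : ⟪f (n+1), f (n+1)⟫_ℂ = 1 := by
          simpa using orthonormal_iff_ite.mp hf (n+1) (n+1)
        rw [h3]; ring
      have key : f (n+1) - ⟪te (n+1), f (n+1)⟫_ℂ • te (n+1)
          = (Real.sqrt (1 - α n) : ℂ) • e n := by
        rw [h1, he n, hte n]
        have hs : ((Real.sqrt (1 - α n) : ℂ)) * (Real.sqrt (1 - α n)) = ((1 - α n : ℝ) : ℂ) := by
          rw [← Complex.ofReal_mul, Real.mul_self_sqrt (by linarith [(hα n).2])]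
        have ht : ((Real.sqrt (α n) : ℂ)) * (Real.sqrt (α n)) = ((α n : ℝ) : ℂ) := by
          rw [← Complex.ofReal_mul, Real.mul_self_sqrt (hα n).1]
        match_scalars
        · push_cast at hs ht ⊢
          linear_combination -hs - ht
        · ring
      rw [key]
      exact Submodule.smul_mem _ _ (Submodule.subset_span ⟨n, rfl⟩)
    · -- j ≤ n : inductive step
      have hrec := aux_rec f hf α te hte n j (by omega)
      have hrot := aux_terot f α hα e te he hte n
      have key : f j - ⟪te (n+1), f j⟫_ℂ • te (n+1)
          = (f j - ⟪te n, f j⟫_ℂ • te n)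
            + ((Real.sqrt (α n) : ℂ) * ⟪te n, f j⟫_ℂ) • e n := by
        rw [hrec]
        set c := ⟪te n, f j⟫_ℂ with hc
        rw [hrot]
        match_scalars <;> ring
      rw [key]
      exact add_mem (ih h) (Submodule.smul_mem _ _ (Submodule.subset_span ⟨n, rfl⟩))

lemma aux_norm_te {H : Type*} [NormedAddCommGroup H] [InnerProductSpace ℂ H]
    (f : ℕ → H) (hf : Orthonormal ℂ f)
    (α : ℕ → ℝ) (hα : ∀ i, α i ∈ Set.Icc (0 : ℝ) 1)
    (te : ℕ → H) (hte0 : te 0 = f 0)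
    (hte : ∀ i, te (i+1) = (Real.sqrt (1 - α i) : ℂ) • te i - (Real.sqrt (α i) : ℂ) • f (i+1)) :
    ∀ n, ‖te n‖ = 1 := by
  intro n
  have h := aux_tete f hf α hα te hte0 hte n
  rw [inner_self_eq_norm_sq_to_K] at h
  have h2 : ‖te n‖^2 = 1 := by
    have h3 : ((‖te n‖^2 : ℝ) : ℂ) = ((1:ℝ) : ℂ) := by push_cast; simpa using h
    exact_mod_cast h3
  nlinarith [norm_nonneg (te n)]

lemma aux_mag {H : Type*} [NormedAddCommGroup H] [InnerProductSpace ℂ H]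
    (f : ℕ → H) (hf : Orthonormal ℂ f)
    (α : ℕ → ℝ) (hα : ∀ i, α i ∈ Set.Icc (0 : ℝ) 1)
    (te : ℕ → H) (hte0 : te 0 = f 0)
    (hte : ∀ i, te (i+1) = (Real.sqrt (1 - α i) : ℂ) • te i - (Real.sqrt (α i) : ℂ) • f (i+1)) :
    ∀ j n, j ≤ n → ‖⟪te n, f j⟫_ℂ‖ ≤ Real.sqrt (∏ i ∈ Finset.Ico j n, (1 - α i)) := by
  intro j n
  induction n with
  | zero =>
    intro hj
    have hj0 : j = 0 := by omega
    subst hj0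
    simp only [Finset.Ico_self, Finset.prod_empty, Real.sqrt_one]
    calc ‖⟪te 0, f 0⟫_ℂ‖ ≤ ‖te 0‖ * ‖f 0‖ := norm_inner_le_norm _ _
      _ = 1 := by rw [aux_norm_te f hf α hα te hte0 hte 0, hf.1 0]; ring
  | succ n ih =>
    intro hj
    rcases Nat.lt_or_ge n j with h | h
    · -- j = n+1
      have hj1 : j = n + 1 := by omega
      subst hj1
      simp only [Finset.Ico_self, Finset.prod_empty, Real.sqrt_one]
      calc ‖⟪te (n+1), f (n+1)⟫_ℂ‖ ≤ ‖te (n+1)‖ * ‖f (n+1)‖ := norm_inner_le_norm _ _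
        _ = 1 := by rw [aux_norm_te f hf α hα te hte0 hte (n+1), hf.1 (n+1)]; ring
    · have hrec := aux_rec f hf α te hte n j (by omega)
      have h1 : (0:ℝ) ≤ 1 - α n := by linarith [(hα n).2]
      have hprodnn : (0:ℝ) ≤ ∏ i ∈ Finset.Ico j n, (1 - α i) :=
        Finset.prod_nonneg fun i _ => by linarith [(hα i).2]
      rw [hrec, norm_mul, Finset.prod_Ico_succ_top h, mul_comm (∏ i ∈ Finset.Ico j n, (1 - α i)),
        Real.sqrt_mul h1]
      have h2 : ‖((Real.sqrt (1 - α n) : ℝ) : ℂ)‖ = Real.sqrt (1 - α n) := by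
        rw [Complex.norm_real, Real.norm_eq_abs, abs_of_nonneg (Real.sqrt_nonneg _)]
      rw [h2]
      exact mul_le_mul_of_nonneg_left (ih h) (Real.sqrt_nonneg _)

/-- Lemma (loss): given an orthonormal sequence $\{f_i\}$ and $\alpha_i \in [0,1]$,
define $\tilde e_0 = f_0$, $e_i = \sqrt{\alpha_i}\tilde e_i + \sqrt{1-\alpha_i} f_{i+1}$,
$\tilde e_{i+1} = \sqrt{1-\alpha_i}\tilde e_i - \sqrt{\alpha_i} f_{i+1}$.  If
$\prod_{i=n}^\infty (1-\alpha_i) = 0$ for every $n$, then $\{e_i\}$ is an orthonormal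
basis of the closed linear span of $\{f_i\}$, and each $e_k$ lies in the algebraic
linear span of $\{f_i\}$. -/
theorem stmt_2 {H : Type*} [NormedAddCommGroup H] [InnerProductSpace ℂ H] [CompleteSpace H]
    (f : ℕ → H) (hf : Orthonormal ℂ f)
    (α : ℕ → ℝ) (hα : ∀ i, α i ∈ Set.Icc (0 : ℝ) 1)
    (e te : ℕ → H) (hte0 : te 0 = f 0)
    (he : ∀ i, e i = (Real.sqrt (α i) : ℂ) • te i + (Real.sqrt (1 - α i) : ℂ) • f (i + 1))
    (hte : ∀ i, te (i + 1) = (Real.sqrt (1 - α i) : ℂ) • te i - (Real.sqrt (α i) : ℂ) • f (i + 1))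
    (hprod : ∀ n, Tendsto (fun k => ∏ i ∈ Finset.Ico n k, (1 - α i)) atTop (nhds 0)) :
    Orthonormal ℂ e ∧
      (Submodule.span ℂ (Set.range e)).topologicalClosure
        = (Submodule.span ℂ (Set.range f)).topologicalClosure ∧
      ∀ k, e k ∈ Submodule.span ℂ (Set.range f) := by
  have part3 : ∀ k, e k ∈ Submodule.span ℂ (Set.range f) := by
    intro k
    rw [he k]
    exact add_mem (Submodule.smul_mem _ _ (aux_te_span f α te hte0 hte k))
      (Submodule.smul_mem _ _ (Submodule.subset_span ⟨k+1, rfl⟩))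
  refine ⟨aux_ee f hf α hα e te hte0 he hte, ?_, part3⟩
  -- each f j is in the closure of span e
  have hfj : ∀ j, f j ∈ closure (Submodule.span ℂ (Set.range e) : Set H) := by
    intro j
    -- the coefficient tends to 0
    have hcoef : Tendsto (fun n => ‖⟪te n, f j⟫_ℂ‖) atTop (nhds 0) := by
      apply squeeze_zero' (Filter.Eventually.of_forall fun n => norm_nonneg _)
      · filter_upwards [eventually_ge_atTop j] with n hn
        exact aux_mag f hf α hα te hte0 hte j n hn
      · have := (Real.continuous_sqrt.tendsto 0).comp (hprod j)
        simpa [Real.sqrt_zero, Function.comp_def] using this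
    have hsmul : Tendsto (fun n => ⟪te n, f j⟫_ℂ • te n) atTop (nhds 0) := by
      rw [tendsto_zero_iff_norm_tendsto_zero]
      have : ∀ n, ‖⟪te n, f j⟫_ℂ • te n‖ = ‖⟪te n, f j⟫_ℂ‖ := by
        intro n
        rw [norm_smul, aux_norm_te f hf α hα te hte0 hte n, mul_one]
      simpa only [this] using hcoef
    have htend : Tendsto (fun n => f j - ⟪te n, f j⟫_ℂ • te n) atTop (nhds (f j)) := by
      have := tendsto_const_nhds (x := f j) (f := atTop (α := ℕ)) |>.sub hsmul
      simpa using this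
    exact mem_closure_of_tendsto htend
      (by filter_upwards [eventually_ge_atTop j] with n hn
          exact aux_g f hf α hα e te hte0 he hte j n hn)
  apply le_antisymm
  · exact Submodule.topologicalClosure_mono (Submodule.span_le.mpr
      (by rintro x ⟨k, rfl⟩; exact part3 k))
  · apply Submodule.topologicalClosure_minimal
    · apply Submodule.span_le.mpr
      rintro x ⟨j, rfl⟩
      have := hfj j
      rw [← Submodule.topologicalClosure_coe] at this
      exact this
    · exact Submodule.isClosed_topologicalClosure _
end

section
/- Let $\{f_i\}_{i\in\mathbb{N}}$ be an orthonormal sequence in a Hilbert space, $\{\alpha_i\}$ in $[0,1]$, and define $e_i, \tilde{e}_i$ by the recursion $\tilde{e}_1 = f_1$, $e_i = \sqrt{\alpha_i}\tilde{e}_i + \sqrt{1-\alpha_i} f_{i+1}$, $\tilde{e}_{i+1} = \sqrt{1-\alpha_i}\tilde{e}_i - \sqrt{\alpha_i} f_{i+1}$. Then, with the convention $\alpha_0 = 1$, for all $j \in \mathbb{N}$ and $n \ge 0$: $|\langle f_j, \tilde{e}_{j+n}\rangle|^2 = \alpha_{j-1} \prod_{k=0}^{n-1}(1-\alpha_{j+k})$.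 -/
open scoped InnerProductSpace

/-- With the recursion $\tilde e_0 = f_0$, $e_i = \sqrt{\alpha_i}\tilde e_i +
\sqrt{1-\alpha_i} f_{i+1}$, $\tilde e_{i+1} = \sqrt{1-\alpha_i}\tilde e_i -
\sqrt{\alpha_i} f_{i+1}$ and the convention $\alpha_{-1} = 1$ (the `if j = 0` case),
for all $j$ and $n \ge 0$:
$|\langle f_j, \tilde e_{j+n}\rangle|^2 = \alpha_{j-1}\prod_{k=0}^{n-1}(1-\alpha_{j+k})$. -/
theorem stmt_3 {H : Type*} [NormedAddCommGroup H] [InnerProductSpace ℂ H]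
    (f : ℕ → H) (hf : Orthonormal ℂ f)
    (α : ℕ → ℝ) (hα : ∀ i, α i ∈ Set.Icc (0 : ℝ) 1)
    (e te : ℕ → H) (hte0 : te 0 = f 0)
    (he : ∀ i, e i = (Real.sqrt (α i) : ℂ) • te i + (Real.sqrt (1 - α i) : ℂ) • f (i + 1))
    (hte : ∀ i, te (i + 1) = (Real.sqrt (1 - α i) : ℂ) • te i - (Real.sqrt (α i) : ℂ) • f (i + 1)) :
    ∀ j n : ℕ, ‖⟪f j, te (j + n)⟫_ℂ‖ ^ 2
      = (if j = 0 then 1 else α (j - 1)) * ∏ k ∈ Finset.range n, (1 - α (j + k)) := by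
  have hfij : ∀ i j : ℕ, ⟪f i, f j⟫_ℂ = if i = j then 1 else 0 := by
    rw [orthonormal_iff_ite] at hf; exact hf
  -- orthogonality: te m ⟂ f j for m < j
  have horth : ∀ m j : ℕ, m < j → ⟪f j, te m⟫_ℂ = 0 := by
    intro m
    induction m with
    | zero =>
      intro j hj
      rw [hte0, hfij]
      simp [show j ≠ 0 by omega]
    | succ m ih =>
      intro j hj
      rw [hte m, inner_sub_right, inner_smul_right, inner_smul_right,
        ih j (by omega), hfij]
      simp [show j ≠ m + 1 by omega]
  -- base: |⟪f j, te j⟫|² = αⱼ₋₁ (or 1)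
  have hbase : ∀ j : ℕ, ‖⟪f j, te j⟫_ℂ‖ ^ 2 = (if j = 0 then 1 else α (j - 1)) := by
    intro j
    cases j with
    | zero => rw [hte0, hfij]; simp
    | succ m =>
      rw [hte m, inner_sub_right, inner_smul_right, inner_smul_right,
        horth m (m + 1) (by omega), hfij]
      simp only [mul_zero, zero_sub, if_pos rfl, mul_one, norm_neg, Complex.norm_real,
        Real.norm_eq_abs, abs_of_nonneg (Real.sqrt_nonneg _), Nat.succ_ne_zero, if_false,
        Nat.add_sub_cancel, if_true, mul_one]
      exact Real.sq_sqrt (hα m).1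
  intro j n
  induction n with
  | zero => simpa using hbase j
  | succ n ih =>
    rw [show j + (n + 1) = (j + n) + 1 from rfl, hte (j + n), inner_sub_right,
      inner_smul_right, inner_smul_right, hfij]
    rw [if_neg (by omega), mul_zero, sub_zero, norm_mul, mul_pow, Complex.norm_real,
      Real.norm_eq_abs, abs_of_nonneg (Real.sqrt_nonneg _),
      Real.sq_sqrt (by linarith [(hα (j + n)).2]), ih, Finset.prod_range_succ]
    ring
end

section
/- Let $E$ be a symmetric linear operator on a dense domain $\mathcal{D}$ of a complex Hilbert space. Suppose real numbers $d_1, d_2, \tilde{d}_1, \tilde{d}_2$ satisfy $\tilde{d}_1 \le d_1, d_2 \le \tilde{d}_2$, $\tilde{d}_1 \neq \tilde{d}_2$, and $\tilde{d}_1 + \tilde{d}_2 = d_1 + d_2$. If $\{f_1, f_2\} \subset \mathcal{D}$ is an orthonormal pair with $\langle E f_i, f_i\rangle = \tilde{d}_i$ for $i = 1, 2$, then there exist $\alpha \in [\frac{\tilde{d}_2 - d_1}{\tilde{d}_2 - \tilde{d}_1}, 1]$ and $\theta \in [0, 2\pi)$ such that the vectors $e_1 = \sqrt{\alpha} f_1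 + \sqrt{1-\alpha} e^{i\theta} f_2$ and $e_2 = \sqrt{1-\alpha} f_1 - \sqrt{\alpha} e^{i\theta} f_2$ satisfy $\langle E e_1, e_1\rangle = d_1$ and $\langle E e_2, e_2\rangle = d_2$. -/
open scoped InnerProductSpace

lemma exists_theta (β : ℂ) : ∃ θ ∈ Set.Ico 0 (2*Real.pi),
    Complex.exp (θ*Complex.I) * β + (starRingEnd ℂ) (Complex.exp (θ*Complex.I) * β) = 0 := by
  rcases eq_or_ne β 0 with h | h
  · exact ⟨0, ⟨le_refl 0, by positivity⟩, by simp [h]⟩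
  · set φ := β.arg with hφ
    set θ₀ : ℝ := Real.pi/2 - φ with hθ₀
    refine ⟨if 0 ≤ θ₀ then θ₀ else θ₀ + 2*Real.pi, ?_, ?_⟩
    · have h1 : -Real.pi < φ := Complex.neg_pi_lt_arg β
      have h2 : φ ≤ Real.pi := Complex.arg_le_pi β
      have hpi := Real.pi_pos
      split_ifs with hpos
      · exact ⟨hpos, by simp only [hθ₀]; linarith⟩
      · push_neg at hpos
        exact ⟨by simp only [hθ₀] at *; linarith, by simp only [hθ₀] at *; linarith⟩
    · have hexp : Complex.exp ((if 0 ≤ θ₀ then θ₀ else θ₀ + 2*Real.pi : ℝ) * Complex.I)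
        = Complex.exp (θ₀ * Complex.I) := by
        split_ifs with hpos
        · rfl
        · push_cast
          rw [add_mul, Complex.exp_add, Complex.exp_two_pi_mul_I, mul_one]
      rw [hexp]
      have hβ : (‖β‖ : ℂ) * Complex.exp (φ * Complex.I) = β :=
        Complex.norm_mul_exp_arg_mul_I β
      have key : Complex.exp (θ₀ * Complex.I) * β = (‖β‖ : ℂ) * Complex.I := by
        conv_lhs => rw [← hβ]
        have : (θ₀ : ℂ) = (↑(Real.pi/2) : ℂ) - (φ : ℂ) := by rw [hθ₀]; push_cast; ring
        rw [this]
        calc Complex.exp (((↑(Real.pi/2) : ℂ) - ↑φ) * Complex.I) *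
              ((‖β‖ : ℂ) * Complex.exp (↑φ * Complex.I))
            = (‖β‖ : ℂ) *
              Complex.exp (((↑(Real.pi/2) : ℂ) - ↑φ) * Complex.I + ↑φ * Complex.I) := by
              rw [Complex.exp_add]; ring
          _ = (‖β‖ : ℂ) * Complex.exp ((↑(Real.pi/2) : ℝ) * Complex.I) := by
              rw [show ((↑(Real.pi/2) : ℂ) - ↑φ) * Complex.I + ↑φ * Complex.I
                = (↑(Real.pi/2) : ℂ) * Complex.I from by ring]
          _ = (‖β‖ : ℂ) * Complex.I := by
              rw [Complex.exp_mul_I, ← Complex.ofReal_cos, ← Complex.ofReal_sin,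
                Real.cos_pi_div_two, Real.sin_pi_div_two]
              simp
      rw [key]
      simp [map_mul, Complex.conj_ofReal]

/-- The $2\times 2$ convex–move lemma for symmetric operators: if a symmetric operator
$E$ on a dense domain has diagonal entries $\tilde d_1, \tilde d_2$ with respect to an
orthonormal pair $\{f_1,f_2\}$ in the domain, and $\tilde d_1 \le d_1, d_2 \le \tilde d_2$,
$\tilde d_1 \ne \tilde d_2$, $\tilde d_1 + \tilde d_2 = d_1 + d_2$, then there are
$\alpha \in [(\tilde d_2-d_1)/(\tilde d_2-\tilde d_1), 1]$ and $\theta \in [0, 2\pi)$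
such that $e_1 = \sqrt{\alpha} f_1 + \sqrt{1-\alpha} e^{i\theta} f_2$ and
$e_2 = \sqrt{1-\alpha} f_1 - \sqrt{\alpha} e^{i\theta} f_2$ satisfy
$\langle Ee_j, e_j\rangle = d_j$. -/
theorem stmt_4 {H : Type*} [NormedAddCommGroup H] [InnerProductSpace ℂ H] [CompleteSpace H]
    (D : Submodule ℂ H) (hD : Dense (D : Set H)) (E : D →ₗ[ℂ] H)
    (hsym : ∀ f g : D, ⟪E f, (g : H)⟫_ℂ = ⟪(f : H), E g⟫_ℂ)
    (d₁ d₂ td₁ td₂ : ℝ)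
    (h11 : td₁ ≤ d₁) (h12 : td₁ ≤ d₂) (h21 : d₁ ≤ td₂) (h22 : d₂ ≤ td₂)
    (hne : td₁ ≠ td₂) (hsum : td₁ + td₂ = d₁ + d₂)
    (f₁ f₂ : D) (hn1 : ‖(f₁ : H)‖ = 1) (hn2 : ‖(f₂ : H)‖ = 1)
    (horth : ⟪(f₁ : H), (f₂ : H)⟫_ℂ = 0)
    (hf1 : ⟪(f₁ : H), E f₁⟫_ℂ = (td₁ : ℂ)) (hf2 : ⟪(f₂ : H), E f₂⟫_ℂ = (td₂ : ℂ)) :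
    ∃ α θ : ℝ, α ∈ Set.Icc ((td₂ - d₁) / (td₂ - td₁)) 1 ∧ θ ∈ Set.Ico 0 (2 * Real.pi) ∧
      (let e₁ : D := (Real.sqrt α : ℂ) • f₁ +
        ((Real.sqrt (1 - α) : ℂ) * Complex.exp (θ * Complex.I)) • f₂
       let e₂ : D := (Real.sqrt (1 - α) : ℂ) • f₁ -
        ((Real.sqrt α : ℂ) * Complex.exp (θ * Complex.I)) • f₂
       ⟪(e₁ : H), E e₁⟫_ℂ = (d₁ : ℂ) ∧ ⟪(e₂ : H), E e₂⟫_ℂ = (d₂ : ℂ)) := by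
  have hlt : td₁ < td₂ := lt_of_le_of_ne (h11.trans h21) hne
  set α : ℝ := (td₂ - d₁) / (td₂ - td₁) with hα
  have hden : (0:ℝ) < td₂ - td₁ := by linarith
  have hα0 : 0 ≤ α := div_nonneg (by linarith) hden.le
  have hα1 : α ≤ 1 := by
    rw [hα, div_le_one hden]; linarith
  have hid : α * td₁ + (1 - α) * td₂ = d₁ := by
    rw [hα]; field_simp; ring
  -- pick θ
  set β : ℂ := ⟪(f₁ : H), E f₂⟫_ℂ with hβdef
  obtain ⟨θ, hθmem, hθ⟩ := exists_theta β
  refine ⟨α, θ, ⟨le_refl α, hα1⟩, hθmem, ?_⟩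
  have hβ2 : ⟪(f₂ : H), E f₁⟫_ℂ = (starRingEnd ℂ) β := by
    rw [← inner_conj_symm, hsym f₁ f₂]
  set a : ℂ := (Real.sqrt α : ℂ) with ha
  set c : ℂ := (Real.sqrt (1 - α) : ℂ) with hc
  set u : ℂ := Complex.exp (θ * Complex.I) with hu
  have h_a : a * a = (α : ℂ) := by
    rw [ha, ← Complex.ofReal_mul, Real.mul_self_sqrt hα0]
  have h_c : c * c = 1 - (α : ℂ) := by
    rw [hc, ← Complex.ofReal_mul, Real.mul_self_sqrt (by linarith)]
    push_cast; ring
  have h_ca : (starRingEnd ℂ) a = a := Complex.conj_ofReal _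
  have h_cc : (starRingEnd ℂ) c = c := Complex.conj_ofReal _
  set v : ℂ := (starRingEnd ℂ) u with hv
  have h_vu : v * u = 1 := by
    rw [hv, hu, ← Complex.exp_conj]
    rw [← Complex.exp_add]
    simp [Complex.conj_ofReal]
  set γ : ℂ := (starRingEnd ℂ) β with hγ
  have h_cross : u * β + v * γ = 0 := by
    have h := hθ
    rw [map_mul] at h
    linear_combination h
  have hidC : (α : ℂ) * td₁ + (1 - (α:ℂ)) * td₂ = (d₁ : ℂ) := by
    exact_mod_cast congrArg (Complex.ofReal) hid
  have hid2C : (1 - (α:ℂ)) * td₁ + (α : ℂ) * td₂ = (d₂ : ℂ) := by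
    have : (1 - α) * td₁ + α * td₂ = d₂ := by nlinarith [hid]
    exact_mod_cast congrArg (Complex.ofReal) this
  constructor
  · simp only [Submodule.coe_add, Submodule.coe_smul, map_add, map_smul,
      inner_add_left, inner_add_right, inner_smul_left, inner_smul_right,
      hf1, hf2, ← hβdef, hβ2, smul_eq_mul]
    simp only [map_mul, h_ca, h_cc, ← hv]
    linear_combination (td₁:ℂ) * h_a + (a*c) * h_cross + (td₂:ℂ)*c*c*h_vu
      + (td₂:ℂ)*h_c + hidC
  · simp only [Submodule.coe_sub, Submodule.coe_smul, map_sub, map_smul,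
      inner_sub_left, inner_sub_right, inner_smul_left, inner_smul_right,
      hf1, hf2, ← hβdef, hβ2, smul_eq_mul]
    simp only [map_mul, h_ca, h_cc, ← hv]
    linear_combination (td₁:ℂ) * h_c - (a*c) * h_cross + (td₂:ℂ)*a*a*h_vu
      + (td₂:ℂ)*h_a + hid2C
end

section
/- Under the hypotheses of the previous $2\times 2$ lemma, if additionally the inequalities $\tilde{d}_1 < d_1, d_2 < \tilde{d}_2$ are strict, then one can choose $\alpha < 1$. -/
open scoped InnerProductSpace

/-- The $2\times 2$ convex–move lemma for symmetric operators: if a symmetric operator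
$E$ on a dense domain has diagonal entries $\tilde d_1, \tilde d_2$ with respect to an
orthonormal pair $\{f_1,f_2\}$ in the domain, and $\tilde d_1 \le d_1, d_2 \le \tilde d_2$,
$\tilde d_1 \ne \tilde d_2$, $\tilde d_1 + \tilde d_2 = d_1 + d_2$, then there are
$\alpha \in [(\tilde d_2-d_1)/(\tilde d_2-\tilde d_1), 1]$ and $\theta \in [0, 2\pi)$
such that $e_1 = \sqrt{\alpha} f_1 + \sqrt{1-\alpha} e^{i\theta} f_2$ and
$e_2 = \sqrt{1-\alpha} f_1 - \sqrt{\alpha} e^{i\theta} f_2$ satisfy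
$\langle Ee_j, e_j\rangle = d_j$. -/
theorem stmt_5 {H : Type*} [NormedAddCommGroup H] [InnerProductSpace ℂ H] [CompleteSpace H]
    (D : Submodule ℂ H) (hD : Dense (D : Set H)) (E : D →ₗ[ℂ] H)
    (hsym : ∀ f g : D, ⟪E f, (g : H)⟫_ℂ = ⟪(f : H), E g⟫_ℂ)
    (d₁ d₂ td₁ td₂ : ℝ)
    (h11 : td₁ < d₁) (h12 : td₁ < d₂) (h21 : d₁ < td₂) (h22 : d₂ < td₂)
    (hne : td₁ ≠ td₂) (hsum : td₁ + td₂ = d₁ + d₂)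
    (f₁ f₂ : D) (hn1 : ‖(f₁ : H)‖ = 1) (hn2 : ‖(f₂ : H)‖ = 1)
    (horth : ⟪(f₁ : H), (f₂ : H)⟫_ℂ = 0)
    (hf1 : ⟪(f₁ : H), E f₁⟫_ℂ = (td₁ : ℂ)) (hf2 : ⟪(f₂ : H), E f₂⟫_ℂ = (td₂ : ℂ)) :
    ∃ α θ : ℝ, α ∈ Set.Ico ((td₂ - d₁) / (td₂ - td₁)) 1 ∧ θ ∈ Set.Ico 0 (2 * Real.pi) ∧
      (let e₁ : D := (Real.sqrt α : ℂ) • f₁ +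
        ((Real.sqrt (1 - α) : ℂ) * Complex.exp (θ * Complex.I)) • f₂
       let e₂ : D := (Real.sqrt (1 - α) : ℂ) • f₁ -
        ((Real.sqrt α : ℂ) * Complex.exp (θ * Complex.I)) • f₂
       ⟪(e₁ : H), E e₁⟫_ℂ = (d₁ : ℂ) ∧ ⟪(e₂ : H), E e₂⟫_ℂ = (d₂ : ℂ)) := by

  classical
  have hd : (0:ℝ) < td₂ - td₁ := by linarith
  set α : ℝ := (td₂ - d₁) / (td₂ - td₁) with hαdef
  have hα0 : 0 < α := by
    apply div_pos <;> linarith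
  have hα1 : α < 1 := by
    rw [hαdef, div_lt_one hd]; linarith
  have hd1 : α * td₁ + (1 - α) * td₂ = d₁ := by
    rw [hαdef]; field_simp; ring
  have hd2 : (1 - α) * td₁ + α * td₂ = d₂ := by
    rw [hαdef]; field_simp; nlinarith [hsum]
  set c : ℂ := ⟪(f₁ : H), E f₂⟫_ℂ with hc
  have hc2 : ⟪(f₂ : H), E f₁⟫_ℂ = (starRingEnd ℂ) c := by
    rw [← hsym f₂ f₁, hc]
    exact (inner_conj_symm (E f₂) ((f₁ : H))).symm
  set w : ℂ := if c = 0 then 1 else Complex.I * (starRingEnd ℂ) c / ((‖c‖ : ℝ) : ℂ) with hwdef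
  have hwabs : ‖w‖ = 1 := by
    rw [hwdef]
    by_cases h : c = 0
    · simp [h]
    · rw [if_neg h]
      rw [norm_div, norm_mul]
      simp [h]
  have hk2 : w * c + (starRingEnd ℂ) w * (starRingEnd ℂ) c = 0 := by
    by_cases h : c = 0
    · simp [h]
    · have hwc : w * c = Complex.I * ((‖c‖ : ℝ) : ℂ) := by
        rw [hwdef, if_neg h]
        have habs : ((‖c‖ : ℝ) : ℂ) ≠ 0 := by
          exact_mod_cast norm_ne_zero_iff.mpr h
        field_simp
        have : (starRingEnd ℂ) c * c = ((‖c‖ : ℝ) : ℂ) * (‖c‖ : ℝ) := by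
          rw [mul_comm, Complex.mul_conj, Complex.normSq_eq_norm_sq]
          push_cast; ring
        rw [this]; ring
      have : (starRingEnd ℂ) w * (starRingEnd ℂ) c = (starRingEnd ℂ) (w * c) := by
        rw [map_mul]
      rw [this, hwc]
      simp only [map_mul, Complex.conj_I, Complex.conj_ofReal]
      ring
  set φ : ℝ := Complex.arg w with hφdef
  set θ : ℝ := if 0 ≤ φ then φ else φ + 2 * Real.pi with hθdef
  have hexpφ : Complex.exp (φ * Complex.I) = w := by
    have := Complex.norm_mul_exp_arg_mul_I w
    rw [hwabs] at this
    simpa using this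
  have hexp : Complex.exp (θ * Complex.I) = w := by
    rw [hθdef]
    by_cases h : 0 ≤ φ
    · rw [if_pos h]; exact hexpφ
    · rw [if_neg h]
      push_cast
      rw [add_mul, Complex.exp_add, hexpφ]
      simp [Complex.exp_two_pi_mul_I]
  have hθmem : θ ∈ Set.Ico 0 (2 * Real.pi) := by
    have hπ := Real.pi_pos
    have ha1 := Complex.neg_pi_lt_arg w
    have ha2 := Complex.arg_le_pi w
    rw [hθdef]
    by_cases h : 0 ≤ φ
    · rw [if_pos h]; exact ⟨h, by rw [hφdef] at *; linarith⟩
    · rw [if_neg h]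
      push_neg at h
      constructor
      · rw [hφdef] at *; linarith
      · linarith
  refine ⟨α, θ, ⟨le_refl _, hα1⟩, hθmem, ?_⟩
  have hA : ((Real.sqrt α : ℝ) : ℂ) * ((Real.sqrt α : ℝ) : ℂ) = (α : ℂ) := by
    norm_cast
    exact Real.mul_self_sqrt hα0.le
  have hB : ((Real.sqrt (1 - α) : ℝ) : ℂ) * ((Real.sqrt (1 - α) : ℝ) : ℂ) = 1 - (α : ℂ) := by
    rw [← Complex.ofReal_mul, Real.mul_self_sqrt (by linarith)]
    push_cast; ring
  have hu1 : (starRingEnd ℂ) w * w = 1 := by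
    rw [← Complex.normSq_eq_conj_mul_self, Complex.normSq_eq_norm_sq, hwabs]
    norm_num
  have hd1c : ((α : ℂ)) * td₁ + (1 - (α : ℂ)) * td₂ = (d₁ : ℂ) := by
    have : ((α * td₁ + (1 - α) * td₂ : ℝ) : ℂ) = ((d₁ : ℝ) : ℂ) := by exact_mod_cast hd1
    push_cast at this; linear_combination this
  have hd2c : (1 - (α : ℂ)) * td₁ + ((α : ℂ)) * td₂ = (d₂ : ℂ) := by
    have : (((1 - α) * td₁ + α * td₂ : ℝ) : ℂ) = ((d₂ : ℝ) : ℂ) := by exact_mod_cast hd2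
    push_cast at this; linear_combination this
  dsimp only
  constructor
  · simp only [hexp, Submodule.coe_add, Submodule.coe_smul, map_add, map_smul,
      inner_add_left, inner_add_right, inner_smul_left, inner_smul_right,
      hf1, hf2, hc2, ← hc, map_mul, Complex.conj_ofReal]
    linear_combination (td₁ : ℂ) * hA + (td₂ : ℂ) * (((Real.sqrt (1 - α) : ℝ) : ℂ) *
      ((Real.sqrt (1 - α) : ℝ) : ℂ)) * hu1 + (td₂ : ℂ) * hB +
      ((Real.sqrt α : ℝ) : ℂ) * ((Real.sqrt (1 - α) : ℝ) : ℂ) * hk2 + hd1c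
  · simp only [hexp, Submodule.coe_sub, Submodule.coe_smul, map_sub, map_smul,
      inner_sub_left, inner_sub_right, inner_smul_left, inner_smul_right,
      hf1, hf2, hc2, ← hc, map_mul, Complex.conj_ofReal]
    linear_combination (td₁ : ℂ) * hB + (td₂ : ℂ) * (((Real.sqrt α : ℝ) : ℂ) *
      ((Real.sqrt α : ℝ) : ℂ)) * hu1 + (td₂ : ℂ) * hA -
      ((Real.sqrt α : ℝ) : ℂ) * ((Real.sqrt (1 - α) : ℝ) : ℂ) * hk2 + hd2c
end

section
/- Let $E$ be a symmetric operator on a dense domain $\mathcal{D}$ of a Hilbert space. Let $\{I_j\}_{j\in J}$ be a collection of pairwise disjoint finite subsets of a countable index set $I$, and let $\{d_i\}_{i\in I}$, $\{\tilde{d}_i\}_{i\in I}$ be real sequences with $\{d_i\}_{i\in I_j} \preccurlyeq \{\tilde{d}_i\}_{i\in I_j}$ for each $j$ and $\tilde{d}_i = d_i$ for $i \notin \bigcup_j I_j$. If $E$ has diagonal $\{\tilde{d}_i\}_{i\in I}$ with respect to an orthonormal sequence $\{f_i\}_{i\in I} \subset \mathcal{D}$, then there exists an orthonormal sequence $\{e_i\}_{i\in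 I} \subset \mathcal{D}$ with the same closed linear span as $\{f_i\}$, with each $e_k$ in the algebraic span of $\{f_i\}$, such that $\langle E e_i, e_i\rangle = d_i$ for all $i \in I$. -/
open scoped InnerProductSpace

/-- Decreasing rearrangement of a finite real tuple. -/
noncomputable def decRearrange {N : ℕ} (a : Fin N → ℝ) : Fin N → ℝ :=
  fun i => a (Tuple.sort a i.rev)

/-- Majorization of finite real sequences: partial sums of the decreasing
rearrangements dominate, with equal total sums. -/
def Majorizes {N : ℕ} (a b : Fin N → ℝ) : Prop :=
  (∀ n : ℕ, ∑ i ∈ Finset.univ.filter (fun i : Fin N => (i : ℕ) < n), decRearrange a i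
      ≤ ∑ i ∈ Finset.univ.filter (fun i : Fin N => (i : ℕ) < n), decRearrange b i) ∧
    ∑ i, a i = ∑ i, b i

/-- Majorization of two real sequences restricted to a finite index set. -/
def MajorizesOn {ι : Type*} (s : Finset ι) (a b : ι → ℝ) : Prop :=
  Majorizes (fun i : Fin s.card => a (s.equivFin.symm i))
    (fun i : Fin s.card => b (s.equivFin.symm i))

/-- Partial sums with cutoff. -/
def PartSum {N : ℕ} (a : Fin N → ℝ) (m : ℕ) : ℝ := ∑ i : Fin N, if (i : ℕ) < m then a i else 0

lemma partSum_eq_filter {N : ℕ} (a : Fin N → ℝ) (m : ℕ) :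
    ∑ i ∈ Finset.univ.filter (fun i : Fin N => (i : ℕ) < m), a i = PartSum a m := by
  rw [PartSum, Finset.sum_filter]

lemma partSum_ge {N : ℕ} (a : Fin N → ℝ) {m : ℕ} (h : N ≤ m) : PartSum a m = ∑ i, a i := by
  unfold PartSum
  exact Finset.sum_congr rfl fun i _ => if_pos (lt_of_lt_of_le i.2 h)

lemma partSum_succ_zero {N : ℕ} (a : Fin (N + 1) → ℝ) (m : ℕ) :
    PartSum a (m + 1) = a 0 + PartSum (a ∘ Fin.succ) m := by
  unfold PartSum
  rw [Fin.sum_univ_succ]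
  simp [Nat.succ_lt_succ_iff]

lemma partSum_one {N : ℕ} (a : Fin (N + 1) → ℝ) : PartSum a 1 = a 0 := by
  have := partSum_succ_zero a 0
  simp [PartSum] at this ⊢

lemma partSum_castSucc {N : ℕ} (a : Fin (N + 1) → ℝ) {m : ℕ} (h : m ≤ N) :
    PartSum (a ∘ Fin.castSucc) m = PartSum a m := by
  unfold PartSum
  rw [Fin.sum_univ_castSucc]
  have : ((Fin.last N : Fin (N+1)) : ℕ) = N := rfl
  simp only [Function.comp_apply, this]
  rw [if_neg (by omega)]
  simp [Fin.coe_castSucc]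

lemma decRearrange_antitone {N : ℕ} (a : Fin N → ℝ) : Antitone (decRearrange a) := by
  intro i j hij
  have := Tuple.monotone_sort a (Fin.rev_le_rev.mpr hij)
  exact this

lemma decRearrange_comp_perm {N : ℕ} (a : Fin N → ℝ) (σ : Equiv.Perm (Fin N)) :
    decRearrange (a ∘ σ) = decRearrange a := by
  funext i
  have := congrFun (Tuple.comp_perm_comp_sort_eq_comp_sort (f := a) (σ := σ)) i.rev
  exact this

lemma decRearrange_of_antitone {N : ℕ} {a : Fin N → ℝ} (ha : Antitone a) :
    decRearrange a = a := by
  have h1 : Monotone (a ∘ (Fin.revPerm : Equiv.Perm (Fin N))) := by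
    intro i j hij
    exact ha (Fin.rev_le_rev.mpr hij)
  have h2 := Tuple.unique_monotone (Tuple.monotone_sort a) h1
  funext i
  have := congrFun h2 i.rev
  simpa [decRearrange] using this

lemma sum_decRearrange {N : ℕ} (a : Fin N → ℝ) : ∑ i, decRearrange a i = ∑ i, a i := by
  have : decRearrange a = fun i => a (((Fin.revPerm : Equiv.Perm (Fin N)).trans (Tuple.sort a)) i) := rfl
  rw [this]
  exact Equiv.sum_comp _ a

lemma succAbove_coe {n : ℕ} (k : Fin (n+1)) (i : Fin (n+1)) :
    ((k.succ.succAbove i : Fin (n+2)) : ℕ) = if (i:ℕ) ≤ (k:ℕ) then (i:ℕ) else (i:ℕ)+1 := by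
  rcases le_or_gt i k with h|h
  · rw [Fin.succAbove_of_castSucc_lt _ _ (Fin.castSucc_lt_succ_iff.mpr h),
      if_pos (Fin.le_def.mp h), Fin.coe_castSucc]
  · rw [Fin.succAbove_of_le_castSucc _ _ (Fin.succ_le_castSucc_iff.mpr h),
      if_neg (Nat.not_le.mpr (Fin.lt_def.mp h)), Fin.val_succ]

lemma succAbove_k {n : ℕ} (k : Fin (n+1)) : k.succ.succAbove k = k.castSucc := by
  rw [Fin.succAbove_of_castSucc_lt _ _ (Fin.castSucc_lt_succ_iff.mpr le_rfl)]

/-- modified sequence: entry `t'` at position `k`, others via `succAbove`. -/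
lemma partSum_modify_low {n : ℕ} (c : Fin (n+2) → ℝ) (k : Fin (n+1)) (t' : ℝ) {m : ℕ}
    (hmk : m ≤ (k:ℕ)) :
    PartSum (fun i : Fin (n+1) => if i = k then t' else c (k.succ.succAbove i)) m
      = PartSum (fun i : Fin (n+1) => c i.castSucc) m := by
  unfold PartSum
  refine Finset.sum_congr rfl fun i _ => ?_
  beta_reduce
  by_cases him : (i:ℕ) < m
  · rw [if_pos him, if_pos him]
    have hik : (i:ℕ) < (k:ℕ) := lt_of_lt_of_le him hmk
    have hine : i ≠ k := by intro h; subst h; omega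
    rw [if_neg hine, Fin.succAbove_of_castSucc_lt _ _
      (Fin.castSucc_lt_succ_iff.mpr (le_of_lt (by rwa [Fin.lt_def])))]
  · rw [if_neg him, if_neg him]

lemma partSum_modify_high {n : ℕ} (c : Fin (n+2) → ℝ) (k : Fin (n+1)) (t : ℝ) {m : ℕ}
    (hkm : (k:ℕ) < m) :
    PartSum (fun i : Fin (n+1) =>
        if i = k then c k.castSucc + c k.succ - t else c (k.succ.succAbove i)) m
      = PartSum c (m+1) - t := by
  have hsplit := Fin.sum_univ_succAbove
    (fun j : Fin (n+2) => if (j:ℕ) < m + 1 then c j else 0) k.succ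
  have h1 : PartSum c (m+1)
      = c k.succ + ∑ i : Fin (n+1),
          (if ((k.succ.succAbove i : Fin (n+2)) : ℕ) < m + 1 then c (k.succ.succAbove i) else 0) := by
    rw [PartSum, hsplit, if_pos (by simp [Fin.val_succ]; omega)]
  have h2 : ∀ i : Fin (n+1),
      (if ((k.succ.succAbove i : Fin (n+2)) : ℕ) < m + 1 then c (k.succ.succAbove i) else 0)
      = (if (i:ℕ) < m then
          (if i = k then c k.castSucc + c k.succ - t else c (k.succ.succAbove i)) else 0)
        + (if i = k then t - c k.succ else 0) := by
    intro i
    rcases eq_or_ne i k with rfl|hik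
    · rw [if_pos (by rw [succAbove_coe]; simp; omega), if_pos hkm, if_pos rfl, if_pos rfl,
        succAbove_k]
      ring
    · rw [if_neg hik, if_neg hik, add_zero]
      have : ((k.succ.succAbove i : Fin (n+2)) : ℕ) < m + 1 ↔ (i:ℕ) < m := by
        rw [succAbove_coe]
        have : (i:ℕ) ≠ (k:ℕ) := fun h => hik (Fin.ext h)
        split_ifs with h <;> omega
      by_cases him : (i:ℕ) < m
      · rw [if_pos (this.mpr him), if_pos him]
      · rw [if_neg (fun hh => him (this.mp hh)), if_neg him]
  rw [PartSum]
  calc ∑ i : Fin (n+1), (if (i:ℕ) < m then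
          (if i = k then c k.castSucc + c k.succ - t else c (k.succ.succAbove i)) else 0)
      = ∑ i : Fin (n+1),
          ((if ((k.succ.succAbove i : Fin (n+2)) : ℕ) < m + 1 then c (k.succ.succAbove i) else 0)
            - (if i = k then t - c k.succ else 0)) := by
        refine Finset.sum_congr rfl fun i _ => ?_
        rw [h2 i]; ring
    _ = (∑ i : Fin (n+1),
          (if ((k.succ.succAbove i : Fin (n+2)) : ℕ) < m + 1 then c (k.succ.succAbove i) else 0))
          - (t - c k.succ) := by
        rw [Finset.sum_sub_distrib, Finset.sum_ite_eq' Finset.univ k (fun _ => t - c k.succ)]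
        simp
    _ = PartSum c (m+1) - t := by rw [h1]; ring

lemma rotate_pair {H : Type*} [NormedAddCommGroup H] [InnerProductSpace ℂ H]
    (D : Submodule ℂ H) (E : D →ₗ[ℂ] H)
    (hsym : ∀ f g : D, ⟪E f, (g:H)⟫_ℂ = ⟪(f:H), E g⟫_ℂ)
    (u v : D) (hu : ‖(u:H)‖ = 1) (hv : ‖(v:H)‖ = 1) (huv : ⟪(u:H),(v:H)⟫_ℂ = 0)
    (a b t : ℝ) (hEu : ⟪(u:H), E u⟫_ℂ = (a:ℂ)) (hEv : ⟪(v:H), E v⟫_ℂ = (b:ℂ))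
    (hbt : b ≤ t) (hta : t ≤ a) :
    ∃ u' v' : D, ‖(u':H)‖ = 1 ∧ ‖(v':H)‖ = 1 ∧ ⟪(u':H),(v':H)⟫_ℂ = 0 ∧
      ⟪(u':H), E u'⟫_ℂ = (t:ℂ) ∧ ⟪(v':H), E v'⟫_ℂ = ((a + b - t : ℝ):ℂ) ∧
      (u':H) ∈ Submodule.span ℂ {(u:H),(v:H)} ∧ (v':H) ∈ Submodule.span ℂ {(u:H),(v:H)} ∧
      (u:H) ∈ Submodule.span ℂ {(u':H),(v':H)} ∧ (v:H) ∈ Submodule.span ℂ {(u':H),(v':H)} := by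
  set z := ⟪(v:H), E u⟫_ℂ with hz
  have hvu : ⟪(v:H),(u:H)⟫_ℂ = 0 := by
    rw [← inner_conj_symm, huv, map_zero]
  have huu : ⟪(u:H),(u:H)⟫_ℂ = 1 := by
    rw [inner_self_eq_norm_sq_to_K, hu]; norm_num
  have hvv : ⟪(v:H),(v:H)⟫_ℂ = 1 := by
    rw [inner_self_eq_norm_sq_to_K, hv]; norm_num
  have huEv : ⟪(u:H), E v⟫_ℂ = (starRingEnd ℂ) z := by
    rw [← hsym u v, ← inner_conj_symm]
  -- intermediate value
  set F : ℝ → ℝ := fun θ => Real.cos θ ^ 2 * a + Real.sin θ ^ 2 * b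
      + 2 * Real.cos θ * Real.sin θ * z.re with hF
  have hcont : Continuous F := by fun_prop
  have hF0 : F 0 = a := by simp [hF]
  have hFpi : F (Real.pi / 2) = b := by simp [hF]
  have ht : t ∈ Set.Icc (F (Real.pi/2)) (F 0) := by rw [hF0, hFpi]; exact ⟨hbt, hta⟩
  obtain ⟨θ, hθmem, hθ⟩ := intermediate_value_Icc' (by positivity : (0:ℝ) ≤ Real.pi/2)
    hcont.continuousOn ht
  set c : ℂ := (Real.cos θ : ℂ) with hc
  set s : ℂ := (Real.sin θ : ℂ) with hs
  have hcs : c^2 + s^2 = 1 := by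
    rw [hc, hs]; push_cast [← Complex.ofReal_pow]
    exact_mod_cast Real.cos_sq_add_sin_sq θ
  have norm_of : ∀ x : H, ⟪x,x⟫_ℂ = 1 → ‖x‖ = 1 := by
    intro x hx
    have h2 : (‖x‖^2 : ℝ) = 1 := by
      have h := inner_self_eq_norm_sq_to_K (𝕜 := ℂ) (E := H) x
      rw [hx] at h
      have h3 : ((‖x‖^2:ℝ):ℂ) = ((1:ℝ):ℂ) := by push_cast; exact h.symm
      exact_mod_cast h3
    nlinarith [norm_nonneg x]
  set w₁ : D := c • u + s • v with hw₁
  set w₂ : D := (-s) • u + c • v with hw₂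
  have cw₁ : (w₁ : H) = c • (u:H) + s • (v:H) := by simp [hw₁]
  have cw₂ : (w₂ : H) = (-s) • (u:H) + c • (v:H) := by simp [hw₂]
  have Ew₁ : E w₁ = c • E u + s • E v := by simp [hw₁]
  have Ew₂ : E w₂ = (-s) • E u + c • E v := by simp [hw₂]
  have key₁ : ⟪(w₁:H), E w₁⟫_ℂ = (t:ℂ) := by
    have h1 : ⟪(w₁:H), E w₁⟫_ℂ = c^2 * a + s^2 * b + c * s * (z + (starRingEnd ℂ) z) := by
      rw [cw₁, Ew₁]
      simp only [inner_add_left, inner_add_right, inner_smul_left, inner_smul_right,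
        hc, hs, Complex.conj_ofReal, hEu, hEv, ← hz, huEv]
      ring
    have h2 : c^2 * (a:ℂ) + s^2 * b + c * s * (z + (starRingEnd ℂ) z) = ((F θ : ℝ) : ℂ) := by
      rw [Complex.add_conj, hF, hc, hs]
      push_cast
      ring
    rw [h1, h2, hθ]
  have key₂ : ⟪(w₂:H), E w₂⟫_ℂ = ((a + b - t : ℝ):ℂ) := by
    have h1 : ⟪(w₂:H), E w₂⟫_ℂ = s^2 * a + c^2 * b - c * s * (z + (starRingEnd ℂ) z) := by
      rw [cw₂, Ew₂]
      simp only [inner_add_left, inner_add_right, inner_smul_left, inner_smul_right,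
        inner_neg_left, inner_neg_right, neg_smul,
        hc, hs, Complex.conj_ofReal, hEu, hEv, ← hz, huEv]
      ring
    have h2 : s^2 * (a:ℂ) + c^2 * b - c * s * (z + (starRingEnd ℂ) z) = ((a + b - F θ : ℝ) : ℂ) := by
      rw [Complex.add_conj, hF, hc, hs]
      push_cast
      linear_combination ((a:ℂ)+(b:ℂ)) * (Complex.sin_sq_add_cos_sq (θ:ℂ))
    rw [h1, h2, hθ]
  have inn12 : ⟪(w₁:H), (w₂:H)⟫_ℂ = 0 := by
    rw [cw₁, cw₂]
    simp only [inner_add_left, inner_add_right, inner_smul_left, inner_smul_right,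
      inner_neg_left, inner_neg_right, neg_smul,
      hc, hs, Complex.conj_ofReal, huu, hvv, huv, hvu]
    ring
  have inn11 : ⟪(w₁:H), (w₁:H)⟫_ℂ = 1 := by
    rw [cw₁]
    simp only [inner_add_left, inner_add_right, inner_smul_left, inner_smul_right,
      hc, hs, Complex.conj_ofReal, huu, hvv, huv, hvu]
    linear_combination hcs
  have inn22 : ⟪(w₂:H), (w₂:H)⟫_ℂ = 1 := by
    rw [cw₂]
    simp only [inner_add_left, inner_add_right, inner_smul_left, inner_smul_right,
      inner_neg_left, inner_neg_right, neg_smul,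
      hc, hs, Complex.conj_ofReal, huu, hvv, huv, hvu]
    linear_combination hcs
  refine ⟨w₁, w₂, norm_of _ inn11, norm_of _ inn22, inn12, key₁, key₂, ?_, ?_, ?_, ?_⟩
  · rw [cw₁]
    exact Submodule.add_mem _
      (Submodule.smul_mem _ _ (Submodule.subset_span (by simp)))
      (Submodule.smul_mem _ _ (Submodule.subset_span (by simp)))
  · rw [cw₂]
    exact Submodule.add_mem _
      (Submodule.smul_mem _ _ (Submodule.subset_span (by simp)))
      (Submodule.smul_mem _ _ (Submodule.subset_span (by simp)))
  · rw [Submodule.mem_span_pair]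
    refine ⟨c, -s, ?_⟩
    rw [cw₁, cw₂]
    match_scalars
    · linear_combination hcs
    · ring
  · rw [Submodule.mem_span_pair]
    refine ⟨s, c, ?_⟩
    rw [cw₁, cw₂]
    match_scalars
    · ring
    · linear_combination hcs

lemma core_sorted {H : Type*} [NormedAddCommGroup H] [InnerProductSpace ℂ H]
    (D : Submodule ℂ H) (E : D →ₗ[ℂ] H)
    (hsym : ∀ f g : D, ⟪E f, (g:H)⟫_ℂ = ⟪(f:H), E g⟫_ℂ) :
    ∀ (n : ℕ) (g : Fin n → D), Orthonormal ℂ (fun i => (g i : H)) →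
    ∀ (c d : Fin n → ℝ), Antitone c → Antitone d →
    (∀ m, PartSum d m ≤ PartSum c m) → (∑ i, d i = ∑ i, c i) →
    (∀ i, ⟪(g i : H), E (g i)⟫_ℂ = (c i : ℂ)) →
    ∃ e : Fin n → D, Orthonormal ℂ (fun i => (e i : H)) ∧
      Submodule.span ℂ (Set.range fun i => (e i : H))
        = Submodule.span ℂ (Set.range fun i => (g i : H)) ∧
      (∀ i, ⟪(e i : H), E (e i)⟫_ℂ = (d i : ℂ)) := by
  intro n
  induction n with
  | zero =>
    intro g hg c d _ _ _ _ hgc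
    exact ⟨g, hg, rfl, fun i => i.elim0⟩
  | succ n ih =>
    intro g hg c d hc hd hps hsum hgc
    rcases Nat.eq_zero_or_pos n with rfl|hn
    · -- single element
      refine ⟨g, hg, rfl, fun i => ?_⟩
      have h0 : d 0 = c 0 := by
        have h1 : ∑ i : Fin 1, d i = d 0 := by simp
        have h2 : ∑ i : Fin 1, c i = c 0 := by simp
        rw [h1, h2] at hsum
        exact hsum
      have : i = 0 := Fin.ext (by omega)
      rw [this, hgc 0, h0]
    · obtain ⟨m, rfl⟩ : ∃ m, n = m + 1 := ⟨n - 1, by omega⟩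
      -- indices live in Fin (m+2), pick the crossing position k : Fin (m+1)
      have hd0c0 : d 0 ≤ c 0 := by
        have := hps 1
        rw [partSum_one, partSum_one] at this
        exact this
      have hclast : c (Fin.last (m+1)) ≤ d 0 := by
        have h1 : ((m:ℝ)+1+1) * c (Fin.last (m+1)) ≤ ∑ i, c i := by
          have := Finset.card_nsmul_le_sum Finset.univ c (c (Fin.last (m+1)))
            (fun i _ => hc (Fin.le_last i))
          simpa using this
        have h2 : ∑ i, d i ≤ ((m:ℝ)+1+1) * d 0 := by
          have := Finset.sum_le_card_nsmul Finset.univ d (d 0)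
            (fun i _ => hd (Fin.zero_le i))
          simpa using this
        have hpos : (0:ℝ) < (m:ℝ)+1+1 := by positivity
        nlinarith [h1, h2, hsum]
      -- choose crossing index k
      obtain ⟨k, hk1, hkmax⟩ : ∃ k : Fin (m+1), d 0 ≤ c k.castSucc ∧
          ∀ j : Fin (m+1), d 0 ≤ c j.castSucc → j ≤ k := by
        classical
        have hSne : (Finset.univ.filter (fun k : Fin (m+1) => d 0 ≤ c k.castSucc)).Nonempty := by
          refine ⟨0, Finset.mem_filter.mpr ⟨Finset.mem_univ _, ?_⟩⟩
          have : ((0:Fin (m+1)).castSucc) = (0 : Fin (m+2)) := rfl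
          rw [this]
          exact hd0c0
        refine ⟨_, (Finset.mem_filter.mp (Finset.max'_mem _ hSne)).2, fun j hj => ?_⟩
        exact Finset.le_max' _ j (Finset.mem_filter.mpr ⟨Finset.mem_univ _, hj⟩)
      have hk2 : c k.succ ≤ d 0 := by
        rcases eq_or_ne k (Fin.last m) with hla|hla
        · have : k.succ = Fin.last (m+1) := by rw [hla]; rfl
          rw [this]
          exact hclast
        · obtain ⟨k', rfl⟩ : ∃ k' : Fin m, k = k'.castSucc := by
            rcases Fin.eq_castSucc_or_eq_last k with h|h
            · exact h
            · exact absurd h hla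
          by_contra hcon
          push_neg at hcon
          have hmem : d 0 ≤ c (k'.succ).castSucc := by
            rw [← Fin.succ_castSucc]
            exact le_of_lt hcon
          exact absurd (hkmax _ hmem) (not_le.mpr Fin.castSucc_lt_succ)
      -- rotate
      obtain ⟨u', v', hnu', hnv', huv', hEu', hEv', hu'mem, hv'mem, humem, hvmem⟩ :=
        rotate_pair D E hsym (g k.castSucc) (g k.succ) (hg.1 _) (hg.1 _)
          (hg.2 (Fin.castSucc_lt_succ : k.castSucc < k.succ).ne)
          (c k.castSucc) (c k.succ) (d 0) (hgc _) (hgc _) hk2 hk1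
      -- new families
      set φ : Fin (m+1) → Fin (m+2) := k.succ.succAbove with hφ
      set g' : Fin (m+1) → D := fun i => if i = k then v' else g (φ i) with hg'
      set c' : Fin (m+1) → ℝ :=
        (fun i => if i = k then c k.castSucc + c k.succ - d 0 else c (φ i)) with hc'
      set d' : Fin (m+1) → ℝ := d ∘ Fin.succ with hd'
      have hφinj : Function.Injective φ := Fin.succAbove_right_injective
      have hφne : ∀ i, φ i ≠ k.succ := fun i => Fin.succAbove_ne _ _
      have hφk : φ k = k.castSucc := succAbove_k k
      have hφnecs : ∀ i, i ≠ k → φ i ≠ k.castSucc := by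
        intro i hik h
        exact hik (hφinj (h.trans hφk.symm))
      -- orthogonality of untouched vectors to the rotated plane
      have horth : ∀ i, i ≠ k → ⟪(g (φ i) : H), (g k.castSucc : H)⟫_ℂ = 0
          ∧ ⟪(g (φ i) : H), (g k.succ : H)⟫_ℂ = 0 :=
        fun i hik => ⟨hg.2 (hφnecs i hik), hg.2 (hφne i)⟩
      have hspanpair : Submodule.span ℂ {((g k.castSucc : H)), ((g k.succ : H))}
          ≤ Submodule.span ℂ (Set.range fun i => (g i : H)) := by
        apply Submodule.span_le.mpr
        rintro x (rfl|rfl)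
        · exact Submodule.subset_span ⟨k.castSucc, rfl⟩
        · exact Submodule.subset_span ⟨k.succ, rfl⟩
      obtain ⟨α₁, β₁, hurep⟩ := Submodule.mem_span_pair.mp hu'mem
      obtain ⟨α₂, β₂, hvrep⟩ := Submodule.mem_span_pair.mp hv'mem
      -- orthonormality of the new family g'
      have hvperp : ∀ i, i ≠ k → ⟪(v':H), (g (φ i) : H)⟫_ℂ = 0 := by
        intro i hik
        rw [← hvrep]
        simp [inner_add_left, inner_smul_left, hg.2 (hφnecs i hik).symm, hg.2 (hφne i).symm]
      have huperp : ∀ i, i ≠ k → ⟪(u':H), (g (φ i) : H)⟫_ℂ = 0 := by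
        intro i hik
        rw [← hurep]
        simp [inner_add_left, inner_smul_left, hg.2 (hφnecs i hik).symm, hg.2 (hφne i).symm]
      have hg'on : Orthonormal ℂ (fun i => (g' i : H)) := by
        constructor
        · intro i
          by_cases hik : i = k
          · simp only [hg', if_pos hik]
            exact hnv'
          · simp only [hg', if_neg hik]
            exact hg.1 _
        · intro i j hij
          by_cases hi : i = k <;> by_cases hj : j = k
          · exact absurd (hi.trans hj.symm) hij
          · simp only [hg', if_pos hi, if_neg hj]
            exact hvperp j hj
          · simp only [hg', if_neg hi, if_pos hj]
            rw [← inner_conj_symm, hvperp i hi, map_zero]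
          · simp only [hg', if_neg hi, if_neg hj]
            exact hg.2 (fun h => hij (hφinj h))
      have hgc' : ∀ i, ⟪(g' i : H), E (g' i)⟫_ℂ = (c' i : ℂ) := by
        intro i
        by_cases hik : i = k
        · subst hik
          simp only [hg', hc', if_pos rfl]
          rw [hEv']
        · simp only [hg', hc', if_neg hik]
          exact hgc _
      have hφmono : Monotone φ := by
        rw [hφ]
        exact (Fin.strictMono_succAbove k.succ).monotone
      have hc'anti : Antitone c' := by
        intro i j hij
        by_cases hi : i = k <;> by_cases hj : j = k
        · rw [hi, hj]
        · rw [hi]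
          have hkj : (k:ℕ) < (j:ℕ) :=
            lt_of_le_of_ne (Fin.le_def.mp (hi ▸ hij)) (fun h => hj (Fin.ext h.symm))
          have h1 : k.succ ≤ φ j := by
            rw [hφ, Fin.le_def, Fin.val_succ, succAbove_coe, if_neg (by omega)]
            omega
          simp only [hc', if_pos rfl, if_neg hj]
          have h2 := hc h1
          linarith [hk1, h2]
        · rw [hj]
          have hik2 : (i:ℕ) ≤ (k:ℕ) := Fin.le_def.mp (hj ▸ hij)
          have h1 : φ i ≤ k.castSucc := by
            rw [hφ, Fin.le_def, succAbove_coe, if_pos hik2, Fin.coe_castSucc]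
            omega
          simp only [hc', if_pos rfl, if_neg hi]
          have h2 := hc h1
          linarith [hk2, h2]
        · simp only [hc', if_neg hi, if_neg hj]
          exact hc (hφmono hij)
      have hd'anti : Antitone d' := by
        intro i j hij
        simp only [hd', Function.comp_apply]
        exact hd (by rw [Fin.le_def, Fin.val_succ, Fin.val_succ]; exact Nat.succ_le_succ (Fin.le_def.mp hij))
      have hLd : ∀ mm : ℕ, PartSum d' mm = PartSum d (mm+1) - d 0 := by
        intro mm
        rw [partSum_succ_zero d mm, hd']
        ring
      have hps' : ∀ mm : ℕ, PartSum d' mm ≤ PartSum c' mm := by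
        intro mm
        rcases le_or_gt mm (k:ℕ) with hmk|hkm
        · have hcc : PartSum c' mm = PartSum c mm := by
            rw [hc', hφ, partSum_modify_low c k _ hmk,
              show (fun i : Fin (m+1) => c i.castSucc) = c ∘ Fin.castSucc from rfl,
              partSum_castSucc c (le_trans hmk (by omega))]
          have hdd : PartSum d' mm ≤ PartSum d mm := by
            rw [← partSum_castSucc d (le_trans hmk (by omega))]
            unfold PartSum
            refine Finset.sum_le_sum fun i _ => ?_
            by_cases him : (i:ℕ) < mm
            · rw [if_pos him, if_pos him]
              exact hd (Fin.castSucc_lt_succ : i.castSucc < i.succ).le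
            · rw [if_neg him, if_neg him]
          calc PartSum d' mm ≤ PartSum d mm := hdd
            _ ≤ PartSum c mm := hps mm
            _ = PartSum c' mm := hcc.symm
        · have hcc : PartSum c' mm = PartSum c (mm+1) - d 0 := by
            rw [hc', hφ]
            exact partSum_modify_high c k (d 0) hkm
          rw [hLd mm, hcc]
          have := hps (mm+1)
          linarith
      have hsum' : ∑ i, d' i = ∑ i, c' i := by
        have h1 : ∑ i, d' i = PartSum d (m+2) - d 0 := by
          rw [← partSum_ge d' (le_refl (m+1)), hLd]
        have h2 : ∑ i, c' i = PartSum c (m+2) - d 0 := by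
          rw [← partSum_ge c' (le_refl (m+1)), hc', hφ,
            partSum_modify_high c k (d 0) k.isLt]
        rw [h1, h2, partSum_ge d (le_refl (m+2)), partSum_ge c (le_refl (m+2)), hsum]
      obtain ⟨e', he'on, he'span, he'diag⟩ := ih g' hg'on c' d' hc'anti hd'anti hps' hsum' hgc'
      -- assemble the final family
      set e : Fin (m+2) → D := Fin.cons u' e' with he
      have he0 : e 0 = u' := rfl
      have heS : ∀ i : Fin (m+1), e i.succ = e' i := fun i => by
        simp only [he, Fin.cons_succ]
      -- span of g' inside span of g
      have hg'le : Submodule.span ℂ (Set.range fun i => (g' i : H))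
          ≤ Submodule.span ℂ (Set.range fun i => (g i : H)) := by
        rw [Submodule.span_le]
        rintro _ ⟨i, rfl⟩
        by_cases hik : i = k
        · simp only [hg', if_pos hik]
          exact hspanpair hv'mem
        · simp only [hg', if_neg hik]
          exact Submodule.subset_span ⟨φ i, rfl⟩
      -- u' orthogonal to everything in span of g'
      have hu'perp : ∀ x : H, x ∈ Submodule.span ℂ (Set.range fun i => (g' i : H)) →
          ⟪(u' : H), x⟫_ℂ = 0 := by
        intro x hx
        have hle : Submodule.span ℂ (Set.range fun i => (g' i : H))
            ≤ (Submodule.span ℂ {(u' : H)})ᗮ := by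
          rw [Submodule.span_le]
          rintro _ ⟨i, rfl⟩
          rw [SetLike.mem_coe, Submodule.mem_orthogonal_singleton_iff_inner_right]
          by_cases hik : i = k
          · simp only [hg', if_pos hik]
            exact huv'
          · simp only [hg', if_neg hik]
            exact huperp i hik
        exact Submodule.mem_orthogonal_singleton_iff_inner_right.mp (hle hx)
      have he'mem : ∀ i : Fin (m+1), ((e' i : D) : H)
          ∈ Submodule.span ℂ (Set.range fun i => (g' i : H)) := by
        intro i
        rw [← he'span]
        exact Submodule.subset_span ⟨i, rfl⟩
      have heon : Orthonormal ℂ (fun i => (e i : H)) := by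
        constructor
        · intro i
          rcases Fin.eq_zero_or_eq_succ i with rfl | ⟨i', rfl⟩
          · simpa only [he, Fin.cons_zero] using hnu'
          · simpa only [he, Fin.cons_succ] using he'on.1 i'
        · intro i j hij
          rcases Fin.eq_zero_or_eq_succ i with rfl | ⟨i', rfl⟩ <;>
            rcases Fin.eq_zero_or_eq_succ j with rfl | ⟨j', rfl⟩
          · exact absurd rfl hij
          · simp only [he, Fin.cons_zero, Fin.cons_succ]
            exact hu'perp _ (he'mem j')
          · simp only [he, Fin.cons_zero, Fin.cons_succ]
            rw [← inner_conj_symm, hu'perp _ (he'mem i'), map_zero]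
          · simp only [he, Fin.cons_succ]
            exact he'on.2 (fun h => hij (congrArg Fin.succ h))
      have hediag : ∀ i, ⟪(e i : H), E (e i)⟫_ℂ = (d i : ℂ) := by
        intro i
        rcases Fin.eq_zero_or_eq_succ i with rfl | ⟨i', rfl⟩
        · simpa only [he, Fin.cons_zero] using hEu'
        · simp only [he, Fin.cons_succ]
          rw [he'diag i', hd']
          rfl
      have he'le : Submodule.span ℂ (Set.range fun i => (e' i : H))
          ≤ Submodule.span ℂ (Set.range fun i => (e i : H)) := by
        rw [Submodule.span_le]
        rintro _ ⟨i, rfl⟩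
        exact Submodule.subset_span ⟨i.succ, by simp only [he, Fin.cons_succ]⟩
      have hespan : Submodule.span ℂ (Set.range fun i => (e i : H))
          = Submodule.span ℂ (Set.range fun i => (g i : H)) := by
        apply le_antisymm
        · rw [Submodule.span_le]
          rintro _ ⟨i, rfl⟩
          rcases Fin.eq_zero_or_eq_succ i with rfl | ⟨i', rfl⟩
          · simp only [he, Fin.cons_zero]
            exact hspanpair hu'mem
          · simp only [he, Fin.cons_succ]
            exact hg'le (he'mem i')
        · rw [Submodule.span_le]
          rintro _ ⟨j, rfl⟩
          have hu'e : (u' : H) ∈ Submodule.span ℂ (Set.range fun i => (e i : H)) :=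
            Submodule.subset_span ⟨0, by simp only [he, Fin.cons_zero]⟩
          have hv'e : (v' : H) ∈ Submodule.span ℂ (Set.range fun i => (e i : H)) := by
            apply he'le
            rw [he'span]
            refine Submodule.subset_span ⟨k, ?_⟩
            simp only [hg', if_pos rfl]
          have hpair' : Submodule.span ℂ {((u' : D) : H), ((v' : D) : H)}
              ≤ Submodule.span ℂ (Set.range fun i => (e i : H)) := by
            rw [Submodule.span_le]
            rintro x (rfl|rfl)
            · exact hu'e
            · exact hv'e
          by_cases hj1 : j = k.castSucc
          · subst hj1
            exact hpair' humem
          · by_cases hj2 : j = k.succ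
            · subst hj2
              exact hpair' hvmem
            · obtain ⟨i, hi⟩ := Fin.exists_succAbove_eq hj2
              have hine : i ≠ k := by
                intro h
                subst h
                rw [hφ] at hφk
                exact hj1 (hi ▸ hφk ▸ rfl)
              have : (g j : H) = (g' i : H) := by
                simp only [hg', if_neg hine, hφ, hi]
              show ((g j : D) : H) ∈ (Submodule.span ℂ (Set.range fun i => (e i : H)) : Set H)
              rw [SetLike.mem_coe, this]
              apply he'le
              rw [he'span]
              exact Submodule.subset_span ⟨i, rfl⟩
      exact ⟨e, heon, hespan, hediag⟩

lemma core_fin {H : Type*} [NormedAddCommGroup H] [InnerProductSpace ℂ H]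
    (D : Submodule ℂ H) (E : D →ₗ[ℂ] H)
    (hsym : ∀ f g : D, ⟪E f, (g:H)⟫_ℂ = ⟪(f:H), E g⟫_ℂ)
    {n : ℕ} (g : Fin n → D) (hg : Orthonormal ℂ (fun i => (g i : H)))
    (c d : Fin n → ℝ) (hmaj : Majorizes d c)
    (hgc : ∀ i, ⟪(g i : H), E (g i)⟫_ℂ = (c i : ℂ)) :
    ∃ e : Fin n → D, Orthonormal ℂ (fun i => (e i : H)) ∧
      Submodule.span ℂ (Set.range fun i => (e i : H))
        = Submodule.span ℂ (Set.range fun i => (g i : H)) ∧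
      (∀ i, ⟪(e i : H), E (e i)⟫_ℂ = (d i : ℂ)) := by
  set σc : Equiv.Perm (Fin n) := (Fin.revPerm : Equiv.Perm (Fin n)).trans (Tuple.sort c)
    with hσc
  have hdec_c : ∀ i, decRearrange c i = c (σc i) := fun i => rfl
  have hdec_d : ∀ i, decRearrange d i = d (Tuple.sort d i.rev) := fun i => rfl
  set g₀ : Fin n → D := g ∘ σc with hg₀
  have hg₀on : Orthonormal ℂ (fun i => (g₀ i : H)) :=
    hg.comp σc σc.injective
  have hps : ∀ m, PartSum (decRearrange d) m ≤ PartSum (decRearrange c) m := by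
    intro m
    rw [← partSum_eq_filter, ← partSum_eq_filter]
    exact hmaj.1 m
  have hsums : ∑ i, decRearrange d i = ∑ i, decRearrange c i := by
    rw [sum_decRearrange, sum_decRearrange, hmaj.2]
  obtain ⟨e₀, he₀on, he₀span, he₀diag⟩ := core_sorted D E hsym n g₀ hg₀on
    (decRearrange c) (decRearrange d) (decRearrange_antitone c) (decRearrange_antitone d)
    hps hsums (fun i => hgc (σc i))
  set πe : Equiv.Perm (Fin n) := (Tuple.sort d).symm.trans (Fin.revPerm : Equiv.Perm (Fin n))
    with hπe
  have hπd : ∀ i, decRearrange d (πe i) = d i := by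
    intro i
    simp only [decRearrange, hπe, Equiv.trans_apply, Fin.revPerm_apply, Fin.rev_rev,
      Equiv.apply_symm_apply]
  refine ⟨e₀ ∘ πe, he₀on.comp πe πe.injective, ?_, ?_⟩
  · have h1 : (Set.range fun i => ((e₀ (πe i) : D) : H)) = Set.range fun i => ((e₀ i : D) : H) := by
      apply Set.ext; intro x; constructor
      · rintro ⟨i, rfl⟩; exact ⟨πe i, rfl⟩
      · rintro ⟨i, rfl⟩; exact ⟨πe.symm i, by simp⟩
    have h2 : (Set.range fun i => ((g (σc i) : D) : H)) = Set.range fun i => ((g i : D) : H) := by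
      apply Set.ext; intro x; constructor
      · rintro ⟨i, rfl⟩; exact ⟨σc i, rfl⟩
      · rintro ⟨i, rfl⟩; exact ⟨σc.symm i, by simp⟩
    calc Submodule.span ℂ (Set.range fun i => ((e₀ (πe i) : D) : H))
        = Submodule.span ℂ (Set.range fun i => ((e₀ i : D) : H)) := by rw [h1]
      _ = Submodule.span ℂ (Set.range fun i => ((g₀ i : D) : H)) := he₀span
      _ = Submodule.span ℂ (Set.range fun i => ((g i : D) : H)) := by rw [hg₀]; exact congrArg _ h2
  · intro i
    have := he₀diag (πe i)
    rw [hπd i] at this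
    exact this

/-- Block diagonal lemma: if a symmetric operator on a dense domain has diagonal
$\{\tilde d_i\}_{i\in I}$ w.r.t. an orthonormal sequence $\{f_i\}$, the sets $I_j$ are
pairwise disjoint finite subsets of the countable index set $I$, on each $I_j$ one has
$\{d_i\} \preccurlyeq \{\tilde d_i\}$, and $\tilde d_i = d_i$ off $\bigcup_j I_j$, then
$E$ has diagonal $\{d_i\}$ w.r.t. an orthonormal sequence $\{e_i\}$ with the same
closed linear span, each $e_k$ in the algebraic span of the $f_i$. -/
theorem stmt_6 {H ι J : Type*} [NormedAddCommGroup H] [InnerProductSpace ℂ H]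
    [CompleteSpace H] [Countable ι]
    (D : Submodule ℂ H) (hD : Dense (D : Set H)) (E : D →ₗ[ℂ] H)
    (hsym : ∀ f g : D, ⟪E f, (g : H)⟫_ℂ = ⟪(f : H), E g⟫_ℂ)
    (d td : ι → ℝ) (I : J → Finset ι)
    (hdisj : ∀ j j' : J, j ≠ j' → Disjoint (I j) (I j'))
    (hmaj : ∀ j, MajorizesOn (I j) d td)
    (hout : ∀ i, i ∉ (⋃ j, (I j : Set ι)) → td i = d i)
    (f : ι → D) (hf : Orthonormal ℂ fun i => (f i : H))
    (hfd : ∀ i, ⟪(f i : H), E (f i)⟫_ℂ = (td i : ℂ)) :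
    ∃ e : ι → D, Orthonormal ℂ (fun i => (e i : H)) ∧
      (∀ k, (e k : H) ∈ Submodule.span ℂ (Set.range fun i => (f i : H))) ∧
      (Submodule.span ℂ (Set.range fun i => (e i : H))).topologicalClosure
        = (Submodule.span ℂ (Set.range fun i => (f i : H))).topologicalClosure ∧
      ∀ i, ⟪(e i : H), E (e i)⟫_ℂ = (d i : ℂ) := by
  classical
  have huniq : ∀ {i : ι} {j j' : J}, i ∈ I j → i ∈ I j' → j = j' := by
    intro i j j' h1 h2
    by_contra hne
    exact Finset.disjoint_left.mp (hdisj j j' hne) h1 h2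
  -- block span submodules
  set V : Finset ι → Submodule ℂ H := fun s => Submodule.span ℂ ((fun m => (f m : H)) '' ↑s)
    with hV
  -- cross-block orthogonality
  have hVV : ∀ (s t : Finset ι), Disjoint s t → ∀ x ∈ V s, ∀ y ∈ V t, ⟪y, x⟫_ℂ = 0 := by
    intro s t hst x hx y hy
    have hortho : V s ⟂ V t := by
      rw [hV]
      rw [Submodule.isOrtho_span]
      rintro _ ⟨m, hm, rfl⟩ _ ⟨m', hm', rfl⟩
      exact hf.2 (fun h => Finset.disjoint_left.mp hst hm (h ▸ hm'))
    have := hortho hx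
    exact (Submodule.mem_orthogonal _ x).mp this y hy
  -- the blocks
  have hblocks : ∀ j : J, ∃ eB : Fin (I j).card → D,
      Orthonormal ℂ (fun i => (eB i : H)) ∧
      Submodule.span ℂ (Set.range fun i => (eB i : H))
        = Submodule.span ℂ (Set.range fun i => ((f ((I j).equivFin.symm i) : D) : H)) ∧
      (∀ i, ⟪(eB i : H), E (eB i)⟫_ℂ = (d ((I j).equivFin.symm i) : ℂ)) := by
    intro j
    refine core_fin D E hsym (fun i => f ((I j).equivFin.symm i)) ?_ _ _ (hmaj j)
      (fun i => hfd _)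
    exact hf.comp (fun i => ((I j).equivFin.symm i : ι))
      (Subtype.val_injective.comp (I j).equivFin.symm.injective)
  choose eB hBon hBspan hBdiag using hblocks
  -- the range of the block base family is the f-image of the block
  have hrange : ∀ j : J,
      (Set.range fun i => ((f ((I j).equivFin.symm i) : D) : H)) = (fun m => (f m : H)) '' ↑(I j) := by
    intro j
    apply Set.ext; intro x; constructor
    · rintro ⟨i, rfl⟩
      exact ⟨((I j).equivFin.symm i : ι), ((I j).equivFin.symm i).2, rfl⟩
    · rintro ⟨m, hm, rfl⟩
      exact ⟨(I j).equivFin ⟨m, hm⟩, by simp⟩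
  -- define the new family
  set e : ι → D := fun i =>
    if h : ∃ j, i ∈ I j then eB h.choose ((I h.choose).equivFin ⟨i, h.choose_spec⟩) else f i
    with he
  have heB : ∀ (i : ι) (j : J) (hij : i ∈ I j), e i = eB j ((I j).equivFin ⟨i, hij⟩) := by
    intro i j hij
    have h : ∃ j', i ∈ I j' := ⟨j, hij⟩
    have hcj : h.choose = j := huniq h.choose_spec hij
    have key : ∀ (j' : J) (hj' : j' = j) (hmem : i ∈ I j'),
        eB j' ((I j').equivFin ⟨i, hmem⟩) = eB j ((I j).equivFin ⟨i, hij⟩) := by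
      rintro j' rfl hmem
      rfl
    rw [he]
    simp only [dif_pos h]
    exact key h.choose hcj h.choose_spec
  have heO : ∀ (i : ι), (¬ ∃ j, i ∈ I j) → e i = f i := by
    intro i h
    rw [he]
    simp only [dif_neg h]
  -- membership of e-vectors in block spans
  have heV : ∀ (i : ι) (j : J) (hij : i ∈ I j), ((e i : D) : H) ∈ V (I j) := by
    intro i j hij
    rw [heB i j hij]
    have h1 : ((eB j ((I j).equivFin ⟨i, hij⟩) : D) : H)
        ∈ Submodule.span ℂ (Set.range fun x => ((eB j x : D) : H)) :=
      Submodule.subset_span ⟨_, rfl⟩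
    rw [hBspan j, hrange j] at h1
    exact h1
  have hfV : ∀ i : ι, ((f i : D) : H) ∈ V {i} := by
    intro i
    exact Submodule.subset_span ⟨i, by simp⟩
  have heon : Orthonormal ℂ (fun i => (e i : H)) := by
    constructor
    · intro i
      beta_reduce
      by_cases h : ∃ j, i ∈ I j
      · obtain ⟨j, hij⟩ := h
        rw [heB i j hij]
        exact (hBon j).1 _
      · rw [heO i h]
        exact hf.1 i
    · intro i i' hne
      beta_reduce
      by_cases h : ∃ j, i ∈ I j <;> by_cases h' : ∃ j, i' ∈ I j
      · obtain ⟨j, hij⟩ := h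
        obtain ⟨j', hij'⟩ := h'
        rcases eq_or_ne j j' with rfl|hjj
        · rw [heB i j hij, heB i' j hij']
          refine (hBon j).2 ?_
          intro hEq
          exact hne (congrArg Subtype.val ((I j).equivFin.injective hEq))
        · exact hVV (I j') (I j) (hdisj j' j (Ne.symm hjj)) _ (heV i' j' hij') _ (heV i j hij)
      · obtain ⟨j, hij⟩ := h
        have hx : ((e i' : D) : H) ∈ V {i'} := by
          rw [heO i' h']
          exact hfV i'
        exact hVV {i'} (I j) (Finset.disjoint_singleton_left.mpr (fun hm => h' ⟨j, hm⟩))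
          _ hx _ (heV i j hij)
      · obtain ⟨j', hij'⟩ := h'
        have hy : ((e i : D) : H) ∈ V {i} := by
          rw [heO i h]
          exact hfV i
        exact hVV (I j') {i} (Finset.disjoint_singleton_right.mpr (fun hm => h ⟨j', hm⟩))
          _ (heV i' j' hij') _ hy
      · rw [heO i h, heO i' h']
        exact hf.2 hne
  have hediag : ∀ i, ⟪(e i : H), E (e i)⟫_ℂ = (d i : ℂ) := by
    intro i
    by_cases h : ∃ j, i ∈ I j
    · obtain ⟨j, hij⟩ := h
      rw [heB i j hij, hBdiag j]
      rw [Equiv.symm_apply_apply]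
    · rw [heO i h, hfd i, hout i (by simpa [Set.mem_iUnion] using h)]
  have hmemf : ∀ k, ((e k : D) : H) ∈ Submodule.span ℂ (Set.range fun i => ((f i : D) : H)) := by
    intro k
    by_cases h : ∃ j, k ∈ I j
    · obtain ⟨j, hkj⟩ := h
      refine Submodule.span_mono ?_ (heV k j hkj)
      rintro _ ⟨m, _, rfl⟩
      exact ⟨m, rfl⟩
    · rw [heO k h]
      exact Submodule.subset_span ⟨k, rfl⟩
  have hspan : Submodule.span ℂ (Set.range fun i => ((e i : D) : H))
      = Submodule.span ℂ (Set.range fun i => ((f i : D) : H)) := by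
    apply le_antisymm
    · rw [Submodule.span_le]
      rintro _ ⟨k, rfl⟩
      exact hmemf k
    · rw [Submodule.span_le]
      rintro _ ⟨k, rfl⟩
      show ((f k : D) : H) ∈ (Submodule.span ℂ (Set.range fun i => ((e i : D) : H)) : Set H)
      by_cases h : ∃ j, k ∈ I j
      · obtain ⟨j, hkj⟩ := h
        have h1 : ((f k : D) : H) ∈ V (I j) := Submodule.subset_span ⟨k, hkj, rfl⟩
        have h2 : V (I j) ≤ Submodule.span ℂ (Set.range fun i => ((e i : D) : H)) := by
          rw [hV]
          beta_reduce
          rw [← hrange j, ← hBspan j, Submodule.span_le]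
          rintro _ ⟨x, rfl⟩
          have hmem : ((I j).equivFin.symm x : ι) ∈ I j := ((I j).equivFin.symm x).2
          have hxe : e ((I j).equivFin.symm x : ι) = eB j x := by
            rw [heB _ j hmem]
            congr 1
            rw [show (⟨((I j).equivFin.symm x : ι), hmem⟩ : {y // y ∈ I j})
                = (I j).equivFin.symm x from Subtype.ext rfl, Equiv.apply_symm_apply]
          exact Submodule.subset_span ⟨_, congrArg _ hxe⟩
        exact h2 h1
      · exact Submodule.subset_span ⟨k, by beta_reduce; rw [heO k h]⟩
  exact ⟨e, heon, hmemf, by rw [hspan], hediag⟩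
end

section
/- Let $\{\lambda_i\}_{i\in\mathbb{N}}$ be a nondecreasing real sequence and $\{d_i\}_{i\in\mathbb{N}}$ a real sequence satisfying: $\lambda_1 \le d_n < \lambda_n$ for all $n \ge 2$, and $d_1 = \lambda_1 + \sum_{i=2}^{\infty}(\lambda_i - d_i) < \lambda_2$ (with the series converging). If a symmetric operator $E$ on dense domain $\mathcal{D}$ has diagonal $\{\lambda_i\}$ with respect to an orthonormal sequence $\{f_i\} \subset \mathcal{D}$, then there is an orthonormal sequence $\{e_i\}$, with each $e_k$ a finite linear combination of the $f_i$ and with the same closed span as $\{f_i\}$, such that $\langle Ee_i, e_i\rangle = d_i$ for all $i$. -/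
open scoped InnerProductSpace ComplexConjugate
open Filter


noncomputable def S8.phse (z : ℂ) : ℂ :=
  if z = 0 then 1 else Complex.I * ((starRingEnd ℂ) z / (‖z‖ : ℝ))

lemma S8.phse_conj_mul (z : ℂ) : (starRingEnd ℂ) (S8.phse z) * S8.phse z = 1 := by
  unfold S8.phse
  split_ifs with h
  · simp
  · have hz : ((‖z‖ : ℝ) : ℂ) ≠ 0 := by
      simp [norm_ne_zero_iff, h]
    have hmc : z * (starRingEnd ℂ) z = ((‖z‖ : ℝ) : ℂ) ^ 2 := by
      rw [Complex.mul_conj, Complex.normSq_eq_norm_sq]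
      push_cast; ring
    rw [map_mul, map_div₀, Complex.conj_I, Complex.conj_conj, Complex.conj_ofReal]
    field_simp
    linear_combination hmc - (z * (starRingEnd ℂ) z) * Complex.I_sq

lemma S8.phse_mul_add (z : ℂ) :
    S8.phse z * z + (starRingEnd ℂ) (S8.phse z) * (starRingEnd ℂ) z = 0 := by
  unfold S8.phse
  split_ifs with h
  · subst h; simp
  · have hz : ((‖z‖ : ℝ) : ℂ) ≠ 0 := by
      simp [norm_ne_zero_iff, h]
    rw [map_mul, map_div₀, Complex.conj_I, Complex.conj_conj, Complex.conj_ofReal]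
    field_simp
    ring

noncomputable def S8.T (lam d : ℕ → ℝ) (n : ℕ) : ℝ := ∑' i, (lam (i + n + 1) - d (i + n + 1))
noncomputable def S8.t (lam d : ℕ → ℝ) (n : ℕ) : ℝ := d n - S8.T lam d n
noncomputable def S8.c (lam d : ℕ → ℝ) (n : ℕ) : ℝ :=
  Real.sqrt ((lam (n+1) - d n) / (lam (n+1) - S8.t lam d n))
noncomputable def S8.s (lam d : ℕ → ℝ) (n : ℕ) : ℝ :=
  Real.sqrt ((d n - S8.t lam d n) / (lam (n+1) - S8.t lam d n))

noncomputable def S8.u {H : Type*} [NormedAddCommGroup H] [InnerProductSpace ℂ H]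
    (D : Submodule ℂ H) (E : D →ₗ[ℂ] H) (f : ℕ → D) (c s : ℕ → ℝ) : ℕ → D
  | 0 => f 0
  | (n+1) => (-(s n : ℂ)) • S8.u D E f c s n
      + ((c n : ℂ) * S8.phse (⟪((S8.u D E f c s n : D) : H), (E (f (n+1)) : H)⟫_ℂ)) • f (n+1)

noncomputable def S8.e {H : Type*} [NormedAddCommGroup H] [InnerProductSpace ℂ H]
    (D : Submodule ℂ H) (E : D →ₗ[ℂ] H) (f : ℕ → D) (c s : ℕ → ℝ) (n : ℕ) : D :=
  (c n : ℂ) • S8.u D E f c s n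
    + ((s n : ℂ) * S8.phse (⟪((S8.u D E f c s n : D) : H), (E (f (n+1)) : H)⟫_ℂ)) • f (n+1)

/-- Lemma (decdel): $\{\lambda_i\}$ nondecreasing, $\{d_i\}$ a real sequence with
$\lambda_0 \le d_n < \lambda_n$ for all $n \ge 1$ and
$d_0 = \lambda_0 + \sum_{i\ge 1}(\lambda_i - d_i) < \lambda_1$ (the series converging).
If a symmetric operator $E$ on a dense domain has diagonal $\{\lambda_i\}$ w.r.t. an
orthonormal sequence $\{f_i\}$, then it has diagonal $\{d_i\}$ w.r.t. an orthonormal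
sequence $\{e_i\}$ with the same closed span, each $e_k$ a finite linear combination
of the $f_i$. -/
theorem stmt_8 {H : Type*} [NormedAddCommGroup H] [InnerProductSpace ℂ H] [CompleteSpace H]
    (D : Submodule ℂ H) (hD : Dense (D : Set H)) (E : D →ₗ[ℂ] H)
    (hsym : ∀ f g : D, ⟪E f, (g : H)⟫_ℂ = ⟪(f : H), E g⟫_ℂ)
    (d lam : ℕ → ℝ) (hlam : Monotone lam)
    (hlow : ∀ n, 1 ≤ n → lam 0 ≤ d n) (hup : ∀ n, 1 ≤ n → d n < lam n)
    (hsummable : Summable fun i => lam (i + 1) - d (i + 1))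
    (hd0 : d 0 = lam 0 + ∑' i, (lam (i + 1) - d (i + 1)))
    (hd0lt : d 0 < lam 1)
    (f : ℕ → D) (hf : Orthonormal ℂ fun i => (f i : H))
    (hfd : ∀ i, ⟪(f i : H), E (f i)⟫_ℂ = (lam i : ℂ)) :
    ∃ e : ℕ → D, Orthonormal ℂ (fun i => (e i : H)) ∧
      (∀ k, (e k : H) ∈ Submodule.span ℂ (Set.range fun i => (f i : H))) ∧
      (Submodule.span ℂ (Set.range fun i => (e i : H))).topologicalClosure
        = (Submodule.span ℂ (Set.range fun i => (f i : H))).topologicalClosure ∧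
      ∀ i, ⟪(e i : H), E (e i)⟫_ℂ = (d i : ℂ) := by
  set a : ℕ → ℝ := fun i => lam (i + 1) - d (i + 1) with ha_def
  have ha_pos : ∀ i, 0 < a i := fun i => sub_pos.mpr (hup (i+1) (by omega))
  have hTsum : ∀ n, Summable fun i => a (i + n) := fun n => (summable_nat_add_iff n).mpr hsummable
  have hTa : ∀ n, S8.T lam d n = ∑' i, a (i + n) := fun n => rfl
  have hT_pos : ∀ n, 0 < S8.T lam d n := by
    intro n
    rw [hTa]
    exact Summable.tsum_pos (hTsum n) (fun i => (ha_pos _).le) 0 (ha_pos _)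
  have hT_rec : ∀ n, S8.T lam d n = a n + S8.T lam d (n + 1) := by
    intro n
    rw [hTa, hTa, Summable.tsum_eq_zero_add (hTsum n)]
    simp only [Nat.zero_add]
    congr 1
    apply tsum_congr; intro i; congr 1; omega
  have hT_tendsto : Filter.Tendsto (S8.T lam d) Filter.atTop (nhds 0) := by
    have := tendsto_sum_nat_add a
    exact this.congr (fun n => (hTa n).symm)
  have ht0 : S8.t lam d 0 = lam 0 := by
    have : S8.T lam d 0 = ∑' i, a i := by rw [hTa]
    simp only [S8.t, this, hd0, ha_def]
    ring
  have hdlt : ∀ n, d n < lam (n + 1) := by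
    intro n
    cases n with
    | zero => exact hd0lt
    | succ m => exact lt_of_lt_of_le (hup (m+1) (by omega)) (hlam (by omega))
  have htlt : ∀ n, S8.t lam d n < d n := fun n => by
    simp only [S8.t]; linarith [hT_pos n]
  have hden : ∀ n, 0 < lam (n + 1) - S8.t lam d n := fun n => by linarith [htlt n, hdlt n]
  have hc2 : ∀ n, S8.c lam d n ^ 2 = (lam (n+1) - d n) / (lam (n+1) - S8.t lam d n) :=
    fun n => Real.sq_sqrt (div_nonneg (by linarith [hdlt n]) (hden n).le)
  have hs2 : ∀ n, S8.s lam d n ^ 2 = (d n - S8.t lam d n) / (lam (n+1) - S8.t lam d n) :=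
    fun n => Real.sq_sqrt (div_nonneg (by linarith [htlt n]) (hden n).le)
  have hc_nonneg : ∀ n, 0 ≤ S8.c lam d n := fun n => Real.sqrt_nonneg _
  have hs_nonneg : ∀ n, 0 ≤ S8.s lam d n := fun n => Real.sqrt_nonneg _
  have hcs1 : ∀ n, S8.c lam d n ^ 2 + S8.s lam d n ^ 2 = 1 := by
    intro n; rw [hc2, hs2, ← add_div, div_eq_one_iff_eq (hden n).ne']; ring
  have hcd : ∀ n, S8.c lam d n ^ 2 * S8.t lam d n + S8.s lam d n ^ 2 * lam (n+1) = d n := by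
    intro n
    rw [hc2, hs2, div_mul_eq_mul_div, div_mul_eq_mul_div, ← add_div,
      div_eq_iff (hden n).ne']
    ring
  have htrec : ∀ n, S8.t lam d (n+1) = S8.t lam d n + lam (n+1) - d n := by
    intro n
    have h1 := hT_rec n
    simp only [S8.t, ha_def] at h1 ⊢
    linarith [h1]
  have hud : ∀ n, S8.s lam d n ^ 2 * S8.t lam d n + S8.c lam d n ^ 2 * lam (n+1)
      = S8.t lam d (n+1) := by
    intro n
    have h1 := hcs1 n
    have h2 := hcd n
    have h3 := htrec n
    linear_combination (S8.t lam d n + lam (n+1)) * h1 - h2 - h3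
  have hs2_le : ∀ n, S8.s lam d (n+1) ^ 2 * S8.T lam d n ≤ S8.T lam d (n+1) := by
    intro n
    rw [hs2]
    have hTT : S8.T lam d n ≤ lam (n+2) - S8.t lam d (n+1) := by
      have h1 := hT_rec n
      have h2 : lam (n+1) ≤ lam (n+2) := hlam (by omega)
      simp only [S8.t, ha_def] at *
      linarith
    have hdt : d (n+1) - S8.t lam d (n+1) = S8.T lam d (n+1) := by simp [S8.t]
    rw [hdt]
    rw [div_mul_eq_mul_div, div_le_iff₀ (hden (n+1))]
    exact mul_le_mul_of_nonneg_left hTT (hT_pos (n+1)).le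
  set cc : ℕ → ℝ := S8.c lam d with hcc
  set ss : ℕ → ℝ := S8.s lam d with hss
  set tC : ℕ → ℝ := S8.t lam d with htC
  set TT : ℕ → ℝ := S8.T lam d with hTT
  have hfi : ∀ i j, ⟪(f i : H), (f j : H)⟫_ℂ = if i = j then 1 else 0 :=
    orthonormal_iff_ite.mp hf
  set U : ℕ → D := S8.u D E f cc ss with hU
  set Z : ℕ → ℂ := fun n => ⟪((U n : D) : H), (E (f (n+1)) : H)⟫_ℂ with hZ
  set P : ℕ → ℂ := fun n => S8.phse (Z n) with hP
  have hUrec : ∀ n, U (n+1) = (-(ss n : ℂ)) • U n + ((cc n : ℂ) * P n) • f (n+1) :=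
    fun n => rfl
  set e : ℕ → D := S8.e D E f cc ss with he
  have hErec : ∀ n, e n = (cc n : ℂ) • U n + ((ss n : ℂ) * P n) • f (n+1) :=
    fun n => rfl
  have hconjP : ∀ n, (starRingEnd ℂ) (P n) * P n = 1 := fun n => S8.phse_conj_mul (Z n)
  have hPZ : ∀ n, P n * Z n + (starRingEnd ℂ) (P n) * (starRingEnd ℂ) (Z n) = 0 :=
    fun n => S8.phse_mul_add (Z n)
  have hcs1C : ∀ n, ((cc n : ℂ)) ^ 2 + ((ss n : ℂ)) ^ 2 = 1 := fun n => by
    exact_mod_cast congrArg (Complex.ofReal) (hcs1 n)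
  have hcd : ∀ n, ((cc n : ℂ)) ^ 2 * (tC n : ℂ) + ((ss n : ℂ)) ^ 2 * (lam (n+1) : ℂ)
      = (d n : ℂ) := fun n => by exact_mod_cast congrArg (Complex.ofReal) (hcd n)
  have hud : ∀ n, ((ss n : ℂ)) ^ 2 * (tC n : ℂ) + ((cc n : ℂ)) ^ 2 * (lam (n+1) : ℂ)
      = (tC (n+1) : ℂ) := fun n => by exact_mod_cast congrArg (Complex.ofReal) (hud n)
  -- u_n ⊥ f_m for m > n
  have hufm : ∀ n m, n < m → ⟪(U n : H), (f m : H)⟫_ℂ = 0 := by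
    intro n
    induction n with
    | zero => intro m hm; rw [hU]; show ⟪(f 0 : H), (f m : H)⟫_ℂ = 0
              rw [hfi, if_neg (by omega : ¬(0 = m))]
    | succ n ih =>
        intro m hm
        rw [hUrec n]
        simp only [Submodule.coe_add, Submodule.coe_smul, inner_add_left, inner_smul_left]
        rw [ih m (by omega), hfi, if_neg (by omega : ¬(n + 1 = m))]
        simp
  have hfmu : ∀ n m, n < m → ⟪(f m : H), (U n : H)⟫_ℂ = 0 := fun n m h => by
    rw [← inner_conj_symm, hufm n m h, map_zero]
  -- ‖u_n‖ = 1
  have huu : ∀ n, ⟪(U n : H), (U n : H)⟫_ℂ = 1 := by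
    intro n
    induction n with
    | zero => rw [hU]; show ⟪(f 0 : H), (f 0 : H)⟫_ℂ = 1
              rw [hfi, if_pos rfl]
    | succ n ih =>
        rw [hUrec n]
        simp only [Submodule.coe_add, Submodule.coe_smul, inner_add_left, inner_add_right,
          inner_smul_left, inner_smul_right, map_mul, map_neg, Complex.conj_ofReal]
        rw [ih, hufm n (n+1) (by omega), hfmu n (n+1) (by omega), hfi, if_pos rfl]
        linear_combination hcs1C n + ((cc n : ℂ))^2 * hconjP n
  -- diagonal of u_n
  have hudiag : ∀ n, ⟪(U n : H), (E (U n) : H)⟫_ℂ = ((tC n : ℝ) : ℂ) := by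
    intro n
    induction n with
    | zero => rw [hU]; show ⟪(f 0 : H), (E (f 0) : H)⟫_ℂ = ((tC 0 : ℝ) : ℂ)
              rw [hfd 0, ht0]
    | succ n ih =>
        have hfEU : ⟪(f (n+1) : H), (E (U n) : H)⟫_ℂ = (starRingEnd ℂ) (Z n) := by
          rw [← hsym]; exact (inner_conj_symm _ _).symm
        rw [hUrec n]
        simp only [map_add, map_smul, Submodule.coe_add, Submodule.coe_smul,
          inner_add_left, inner_add_right, inner_smul_left, inner_smul_right,
          map_mul, map_neg, Complex.conj_ofReal]
        rw [ih, hfEU, hfd (n+1), show ⟪((U n : D) : H), (E (f (n+1)) : H)⟫_ℂ = Z n from rfl]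
        linear_combination hud n - ((cc n : ℂ)) * ((ss n : ℂ)) * hPZ n
          + ((cc n : ℂ))^2 * ((lam (n+1) : ℝ) : ℂ) * hconjP n
  -- e_k ⊥ f_m for m > k+1
  have hEfm : ∀ k m, k + 1 < m → ⟪(e k : H), (f m : H)⟫_ℂ = 0 := by
    intro k m hm
    rw [hErec k]
    simp only [Submodule.coe_add, Submodule.coe_smul, inner_add_left, inner_smul_left]
    rw [hufm k m (by omega), hfi, if_neg (by omega : ¬(k + 1 = m))]
    simp
  -- e_k ⊥ u_n for k < n
  have heu : ∀ n k, k < n → ⟪(e k : H), (U n : H)⟫_ℂ = 0 := by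
    intro n
    induction n with
    | zero => omega
    | succ n ih =>
        intro k hk
        rw [hUrec n]
        simp only [Submodule.coe_add, Submodule.coe_smul, inner_add_right, inner_smul_right]
        rcases lt_or_eq_of_le (Nat.lt_succ_iff.mp hk) with h | h
        · rw [ih k h, hEfm k (n+1) (by omega)]
          simp
        · subst h
          have h1 : ⟪(e k : H), (U k : H)⟫_ℂ = ((cc k : ℝ) : ℂ) := by
            rw [hErec k]
            simp only [Submodule.coe_add, Submodule.coe_smul, inner_add_left, inner_smul_left,
              map_mul, Complex.conj_ofReal]
            rw [huu k, hfmu k (k+1) (by omega)]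
            simp
          have h2 : ⟪(e k : H), (f (k+1) : H)⟫_ℂ = ((ss k : ℝ) : ℂ) * (starRingEnd ℂ) (P k) := by
            rw [hErec k]
            simp only [Submodule.coe_add, Submodule.coe_smul, inner_add_left, inner_smul_left,
              map_mul, Complex.conj_ofReal]
            rw [hufm k (k+1) (by omega), hfi, if_pos rfl]
            simp
          rw [h1, h2]
          linear_combination ((ss k : ℂ)) * ((cc k : ℂ)) * hconjP k
  -- orthonormality of e
  have heeD : ∀ n, ⟪(e n : H), (e n : H)⟫_ℂ = 1 := by
    intro n
    rw [hErec n]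
    simp only [Submodule.coe_add, Submodule.coe_smul, inner_add_left, inner_add_right,
      inner_smul_left, inner_smul_right, map_mul, Complex.conj_ofReal]
    rw [huu n, hufm n (n+1) (by omega), hfmu n (n+1) (by omega), hfi, if_pos rfl]
    linear_combination hcs1C n + ((ss n : ℂ))^2 * hconjP n
  have heeO : ∀ k n, k < n → ⟪(e k : H), (e n : H)⟫_ℂ = 0 := by
    intro k n h
    rw [hErec n]
    simp only [Submodule.coe_add, Submodule.coe_smul, inner_add_right, inner_smul_right]
    rw [heu n k h, hEfm k (n+1) (by omega)]
    simp
  -- diagonal of e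
  have hediag : ∀ n, ⟪(e n : H), (E (e n) : H)⟫_ℂ = ((d n : ℝ) : ℂ) := by
    intro n
    have hfEU : ⟪(f (n+1) : H), (E (U n) : H)⟫_ℂ = (starRingEnd ℂ) (Z n) := by
      rw [← hsym]; exact (inner_conj_symm _ _).symm
    rw [hErec n]
    simp only [map_add, map_smul, Submodule.coe_add, Submodule.coe_smul,
      inner_add_left, inner_add_right, inner_smul_left, inner_smul_right,
      map_mul, Complex.conj_ofReal]
    rw [hudiag n, hfEU, hfd (n+1), show ⟪((U n : D) : H), (E (f (n+1)) : H)⟫_ℂ = Z n from rfl]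
    linear_combination hcd n + ((cc n : ℂ)) * ((ss n : ℂ)) * hPZ n
      + ((ss n : ℂ))^2 * ((lam (n+1) : ℝ) : ℂ) * hconjP n
  -- membership
  have hmemU : ∀ n, (U n : H) ∈ Submodule.span ℂ (Set.range fun i => (f i : H)) := by
    intro n
    induction n with
    | zero => exact Submodule.subset_span ⟨0, rfl⟩
    | succ n ih =>
        rw [hUrec n]
        simp only [Submodule.coe_add, Submodule.coe_smul]
        exact Submodule.add_mem _ (Submodule.smul_mem _ _ ih)
          (Submodule.smul_mem _ _ (Submodule.subset_span ⟨n+1, rfl⟩))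
  have hmemE : ∀ n, (e n : H) ∈ Submodule.span ℂ (Set.range fun i => (f i : H)) := by
    intro n
    rw [hErec n]
    simp only [Submodule.coe_add, Submodule.coe_smul]
    exact Submodule.add_mem _ (Submodule.smul_mem _ _ (hmemU n))
      (Submodule.smul_mem _ _ (Submodule.subset_span ⟨n+1, rfl⟩))
  -- expansion of f k
  have hexp : ∀ n k, k ≤ n → (f k : H)
      = (∑ j ∈ Finset.range n, ⟪(e j : H), (f k : H)⟫_ℂ • (e j : H))
        + ⟪(U n : H), (f k : H)⟫_ℂ • (U n : H) := by
    intro n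
    induction n with
    | zero =>
        intro k hk
        interval_cases k
        simp only [Finset.range_zero, Finset.sum_empty, zero_add]
        rw [show ((U 0 : D) : H) = ((f 0 : D) : H) from rfl, hfi, if_pos rfl, one_smul]
    | succ n ih =>
        intro k hk
        rcases Nat.lt_succ_iff_lt_or_eq.mp (Nat.lt_succ_of_le hk) with h | h
        · have hk' : k ≤ n := by omega
          have hcoef1 : ⟪(e n : H), (f k : H)⟫_ℂ = ((cc n : ℝ) : ℂ) * ⟪(U n : H), (f k : H)⟫_ℂ := by
            rw [hErec n]
            simp only [Submodule.coe_add, Submodule.coe_smul, inner_add_left, inner_smul_left,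
              map_mul, Complex.conj_ofReal]
            rw [hfi, if_neg (by omega : ¬(n + 1 = k))]
            simp
          have hcoef2 : ⟪(U (n+1) : H), (f k : H)⟫_ℂ
              = -((ss n : ℝ) : ℂ) * ⟪(U n : H), (f k : H)⟫_ℂ := by
            rw [hUrec n]
            simp only [Submodule.coe_add, Submodule.coe_smul, inner_add_left, inner_smul_left,
              map_mul, map_neg, Complex.conj_ofReal]
            rw [hfi, if_neg (by omega : ¬(n + 1 = k))]
            simp
          have key : (⟪(U n : H), (f k : H)⟫_ℂ) • (U n : H)
              = ⟪(e n : H), (f k : H)⟫_ℂ • (e n : H)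
                + ⟪(U (n+1) : H), (f k : H)⟫_ℂ • (U (n+1) : H) := by
            rw [hcoef1, hcoef2, hErec n, hUrec n]
            simp only [Submodule.coe_add, Submodule.coe_smul]
            match_scalars
            · linear_combination (-⟪(U n : H), (f k : H)⟫_ℂ) * hcs1C n
            · ring
          calc (f k : H)
              = (∑ j ∈ Finset.range n, ⟪(e j : H), (f k : H)⟫_ℂ • (e j : H))
                + ⟪(U n : H), (f k : H)⟫_ℂ • (U n : H) := ih k hk'
            _ = (∑ j ∈ Finset.range n, ⟪(e j : H), (f k : H)⟫_ℂ • (e j : H))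
                + (⟪(e n : H), (f k : H)⟫_ℂ • (e n : H)
                  + ⟪(U (n+1) : H), (f k : H)⟫_ℂ • (U (n+1) : H)) := by rw [key]
            _ = (∑ j ∈ Finset.range (n+1), ⟪(e j : H), (f k : H)⟫_ℂ • (e j : H))
                + ⟪(U (n+1) : H), (f k : H)⟫_ℂ • (U (n+1) : H) := by
                  rw [Finset.sum_range_succ]; abel
        · subst h
          have hsum0 : (∑ j ∈ Finset.range n, ⟪(e j : H), (f (n+1) : H)⟫_ℂ • (e j : H)) = 0 := by
            apply Finset.sum_eq_zero
            intro j hj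
            have := Finset.mem_range.mp hj
            rw [hEfm j (n+1) (by omega), zero_smul]
          have hcoef3 : ⟪(e n : H), (f (n+1) : H)⟫_ℂ
              = ((ss n : ℝ) : ℂ) * (starRingEnd ℂ) (P n) := by
            rw [hErec n]
            simp only [Submodule.coe_add, Submodule.coe_smul, inner_add_left, inner_smul_left,
              map_mul, Complex.conj_ofReal]
            rw [hufm n (n+1) (by omega), hfi, if_pos rfl]
            simp
          have hcoef4 : ⟪(U (n+1) : H), (f (n+1) : H)⟫_ℂ
              = ((cc n : ℝ) : ℂ) * (starRingEnd ℂ) (P n) := by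
            rw [hUrec n]
            simp only [Submodule.coe_add, Submodule.coe_smul, inner_add_left, inner_smul_left,
              map_mul, map_neg, Complex.conj_ofReal]
            rw [hufm n (n+1) (by omega), hfi, if_pos rfl]
            simp
          rw [Finset.sum_range_succ, hsum0, zero_add, hcoef3, hcoef4, hErec n, hUrec n]
          simp only [Submodule.coe_add, Submodule.coe_smul]
          match_scalars
          · linear_combination (-((ss n : ℂ)^2 + (cc n : ℂ)^2)) * hconjP n - hcs1C n
          · ring
  -- norm facts
  have hnormU : ∀ n, ‖((U n : D) : H)‖ = 1 := by
    intro n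
    have h := huu n
    rw [inner_self_eq_norm_sq_to_K] at h
    have h3 : ((‖((U n : D) : H)‖ ^ 2 : ℝ) : ℂ) = ((1 : ℝ) : ℂ) := by push_cast; exact h
    have h2 := Complex.ofReal_inj.mp h3
    nlinarith [norm_nonneg ((U n : D) : H)]
  have hnormf : ∀ i, ‖((f i : D) : H)‖ = 1 := hf.1
  have hw1 : ∀ n k, ‖⟪(U n : H), (f k : H)⟫_ℂ‖ ≤ 1 := by
    intro n k
    have h := norm_inner_le_norm (𝕜 := ℂ) ((U n : D) : H) ((f k : D) : H)
    rwa [hnormU, hnormf, mul_one] at h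
  have hwrec : ∀ n k, k ≤ n → ⟪(U (n+1) : H), (f k : H)⟫_ℂ
      = -((ss n : ℝ) : ℂ) * ⟪(U n : H), (f k : H)⟫_ℂ := by
    intro n k hk
    rw [hUrec n]
    simp only [Submodule.coe_add, Submodule.coe_smul, inner_add_left, inner_smul_left,
      map_mul, map_neg, Complex.conj_ofReal]
    rw [hfi, if_neg (by omega : ¬(n + 1 = k))]
    simp
  have hwnorm : ∀ n k, k ≤ n → ‖⟪(U (n+1) : H), (f k : H)⟫_ℂ‖ ^ 2
      = ss n ^ 2 * ‖⟪(U n : H), (f k : H)⟫_ℂ‖ ^ 2 := by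
    intro n k hk
    rw [hwrec n k hk, norm_mul, norm_neg, Complex.norm_real, Real.norm_eq_abs,
      abs_of_nonneg (hs_nonneg n), mul_pow]
  have hQ : ∀ k n, max k 1 ≤ n → ‖⟪(U (n+1) : H), (f k : H)⟫_ℂ‖ ^ 2 * TT (max k 1) ≤ TT n := by
    intro k
    refine Nat.le_induction ?_ ?_
    · have h1 := hw1 (max k 1 + 1) k
      have h0 := norm_nonneg (⟪(U (max k 1 + 1) : H), (f k : H)⟫_ℂ)
      have hsq : ‖⟪(U (max k 1 + 1) : H), (f k : H)⟫_ℂ‖ ^ 2 ≤ 1 := by nlinarith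
      nlinarith [mul_le_mul_of_nonneg_right hsq (hT_pos (max k 1)).le]
    · intro n hn ih
      have hrec := hwnorm (n+1) k (by omega)
      rw [hrec]
      have h1 := mul_le_mul_of_nonneg_left ih (sq_nonneg (ss (n+1)))
      have h2 := hs2_le n
      have h3 := hw1 (n+1) k
      nlinarith [sq_nonneg (ss (n+1)), norm_nonneg (⟪(U (n+1) : H), (f k : H)⟫_ℂ)]
  have hwt : ∀ k, Tendsto (fun n => ‖⟪(U n : H), (f k : H)⟫_ℂ‖) atTop (nhds 0) := by
    intro k
    have hTN := hT_pos (max k 1)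
    have h2 : Tendsto (fun n => TT n / TT (max k 1)) atTop (nhds 0) := by
      simpa using hT_tendsto.div_const (TT (max k 1))
    have h3 : Tendsto (fun n => ‖⟪(U (n+1) : H), (f k : H)⟫_ℂ‖ ^ 2) atTop (nhds 0) := by
      apply squeeze_zero' (Filter.Eventually.of_forall fun n => sq_nonneg _) ?_ h2
      filter_upwards [Filter.eventually_ge_atTop (max k 1)] with n hn
      rw [le_div_iff₀ hTN]
      exact hQ k n hn
    have h4 : Tendsto (fun n => ‖⟪(U (n+1) : H), (f k : H)⟫_ℂ‖) atTop (nhds 0) := by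
      have h5 := h3.sqrt
      rw [Real.sqrt_zero] at h5
      exact h5.congr fun n => Real.sqrt_sq (norm_nonneg _)
    exact (Filter.tendsto_add_atTop_iff_nat 1).mp h4
  -- f is in the closure of the span of e
  have hfcl : ∀ k, ((f k : D) : H)
      ∈ (Submodule.span ℂ (Set.range fun i => ((e i : D) : H))).topologicalClosure := by
    intro k
    have hgmem : ∀ n, (∑ j ∈ Finset.range n, ⟪(e j : H), (f k : H)⟫_ℂ • ((e j : D) : H))
        ∈ Submodule.span ℂ (Set.range fun i => ((e i : D) : H)) := fun n =>
      Submodule.sum_mem _ fun j _ =>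
        Submodule.smul_mem _ _ (Submodule.subset_span ⟨j, rfl⟩)
    have hgt : Tendsto (fun n => ∑ j ∈ Finset.range n, ⟪(e j : H), (f k : H)⟫_ℂ • ((e j : D) : H))
        atTop (nhds ((f k : D) : H)) := by
      rw [tendsto_iff_norm_sub_tendsto_zero]
      apply squeeze_zero' (Filter.Eventually.of_forall fun n => norm_nonneg _) ?_ (hwt k)
      filter_upwards [Filter.eventually_ge_atTop k] with n hn
      have hx := hexp n k hn
      have hdiff : (∑ j ∈ Finset.range n, ⟪(e j : H), (f k : H)⟫_ℂ • ((e j : D) : H))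
          - ((f k : D) : H) = -(⟪(U n : H), (f k : H)⟫_ℂ • ((U n : D) : H)) := by
        have hgen : ∀ (a b c : H), a = b + c → b - a = -c := fun a b c h => by
          rw [h]; abel
        exact hgen _ _ _ hx
      rw [hdiff, norm_neg, norm_smul, hnormU, mul_one]
    have hc := mem_closure_of_tendsto hgt (Filter.Eventually.of_forall hgmem)
    have h7 : ((f k : D) : H)
        ∈ ((Submodule.span ℂ (Set.range fun i => ((e i : D) : H))).topologicalClosure : Set H) := by
      rw [Submodule.topologicalClosure_coe]
      exact hc
    exact h7
  -- conclusion
  refine ⟨e, ?_, hmemE, ?_, hediag⟩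
  · apply orthonormal_iff_ite.mpr
    intro i j
    rcases lt_trichotomy i j with h | h | h
    · rw [heeO i j h, if_neg h.ne]
    · subst h; rw [heeD, if_pos rfl]
    · rw [← inner_conj_symm, heeO j i h, map_zero, if_neg h.ne']
  · apply le_antisymm
    · apply Submodule.topologicalClosure_mono
      apply Submodule.span_le.mpr
      rintro x ⟨j, rfl⟩
      exact hmemE j
    · apply Submodule.topologicalClosure_minimal
      · apply Submodule.span_le.mpr
        rintro x ⟨j, rfl⟩
        exact hfcl j
      · exact Submodule.isClosed_topologicalClosure _
end

section
/- Let $E$ be a symmetric operator on a dense domain $\mathcal{D}$ of a Hilbert space, and let $\{d_i\}$, $\{\lambda_i\}$ be nondecreasing unbounded real sequences with $d_i \ge \lambda_i$ for every $i$. If there exists an orthonormal sequence $\{f_i\}_{i\in\mathbb{N}} \subset \mathcal{D}$ with $\langle Ef_i, f_i\rangle = \lambda_i$ for all $i$, then there exists an orthonormal sequence $\{e_i\}_{i\in\mathbb{N}}$, with each $e_k$ in the algebraic span of $\{f_i\}$ and with the same closed linear span as $\{f_i\}$, such that $\langle Ee_i, e_i\rangle = d_i$ for all $i$. -/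
open scoped InnerProductSpace

namespace StrongDom

variable {H : Type*} [NormedAddCommGroup H] [InnerProductSpace ℂ H]

structure Setup (H : Type*) [NormedAddCommGroup H] [InnerProductSpace ℂ H] where
  D : Submodule ℂ H
  E : D →ₗ[ℂ] H
  hsym : ∀ f g : D, ⟪E f, (g : H)⟫_ℂ = ⟪(f : H), E g⟫_ℂ
  d : ℕ → ℝ
  lam : ℕ → ℝ
  hd : Monotone d
  hlam : Monotone lam
  hdub : ¬ BddAbove (Set.range d)
  hlamub : ¬ BddAbove (Set.range lam)
  hdom : ∀ i, lam i ≤ d i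
  f : ℕ → D
  hf : Orthonormal ℂ fun i => (f i : H)
  hfd : ∀ i, ⟪(f i : H), E (f i)⟫_ℂ = (lam i : ℂ)

variable (S : Setup H)

/-- existence of an unused index with large lambda -/
lemma exists_unused_large (u : Finset ℕ) (T : ℝ) :
    ∃ j, j ∉ u ∧ T ≤ S.lam j := by
  have h1 : ∃ N, T ≤ S.lam N := by
    by_contra h
    push_neg at h
    exact S.hlamub ⟨T, by rintro x ⟨n, rfl⟩; exact (h n).le⟩
  obtain ⟨N, hN⟩ := h1
  refine ⟨max N (u.sup id + 1), fun hmem => ?_, le_trans hN (S.hlam (le_max_left _ _))⟩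
  have := Finset.le_sup (f := id) hmem
  simp only [id] at this
  omega

lemma exists_d_large (T : ℝ) : ∃ N, T < S.d N := by
  by_contra h
  push_neg at h
  exact S.hdub ⟨T, by rintro x ⟨n, rfl⟩; exact h n⟩

noncomputable def sMin (u : Finset ℕ) : ℕ := sInf {j | j ∉ u}

lemma sMin_not_mem (u : Finset ℕ) : sMin u ∉ u := by
  have : ({j | j ∉ u} : Set ℕ).Nonempty := by
    refine ⟨u.sup id + 1, fun hmem => ?_⟩
    have := Finset.le_sup (f := id) hmem
    simp only [id] at this
    omega
  exact Nat.sInf_mem this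

lemma sMin_le {u : Finset ℕ} {k : ℕ} (hk : k ∉ u) : sMin u ≤ k := Nat.sInf_le hk

lemma mem_of_lt_sMin {u : Finset ℕ} {k : ℕ} (hk : k < sMin u) : k ∈ u := by
  by_contra h
  exact absurd (sMin_le h) (by omega)

/-- pigeonhole : if `u.card = n+1` then `sMin u ≤ n+1`. -/
lemma sMin_le_of_card {u : Finset ℕ} {n : ℕ} (hc : u.card = n + 1) : sMin u ≤ n + 1 := by
  by_contra h
  push_neg at h
  have hsub : Finset.range (n + 2) ⊆ u := by
    intro k hk
    simp only [Finset.mem_range] at hk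
    exact mem_of_lt_sMin (lt_of_lt_of_le hk (by omega))
  have := Finset.card_le_card hsub
  simp [hc] at this


noncomputable def omg (μ : ℂ) : ℂ :=
  if μ = 0 then 1 else Complex.I * (starRingEnd ℂ μ) * (‖μ‖ : ℂ)⁻¹

lemma mu_key (μ : ℂ) : μ * (starRingEnd ℂ) μ = ((‖μ‖ : ℂ))^2 := by
  rw [Complex.mul_conj, ← Complex.sq_norm]
  push_cast
  ring

lemma omg_conj_mul (μ : ℂ) : (starRingEnd ℂ) (omg μ) * omg μ = 1 := by
  rw [omg]
  split_ifs with h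
  · simp
  · have hn : ((‖μ‖ : ℝ) : ℂ) ≠ 0 := by
      simpa using h
    simp only [map_mul, Complex.conj_I, map_inv₀, Complex.conj_ofReal, Complex.conj_conj]
    field_simp
    linear_combination mu_key μ - (μ * (starRingEnd ℂ) μ) * Complex.I_sq


lemma omg_mul_conj (μ : ℂ) : omg μ * (starRingEnd ℂ) (omg μ) = 1 := by
  rw [mul_comm]; exact omg_conj_mul μ

lemma omg_cross (μ : ℂ) : omg μ * μ + (starRingEnd ℂ) (omg μ * μ) = 0 := by
  rw [Complex.add_conj]
  have h0 : (omg μ * μ).re = 0 := by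
    rw [omg]
    split_ifs with h
    · simp [h]
    · have : Complex.I * (starRingEnd ℂ μ) * (‖μ‖ : ℂ)⁻¹ * μ
          = Complex.I * ((Complex.normSq μ * ‖μ‖⁻¹ : ℝ) : ℂ) := by
        push_cast
        rw [← Complex.mul_conj μ]
        ring
      rw [this]
      simp
  rw [h0]
  push_cast
  ring

lemma norm_omg (μ : ℂ) : ‖omg μ‖ = 1 := by
  have h2 : ‖omg μ * (starRingEnd ℂ) (omg μ)‖ = 1 := by rw [omg_mul_conj]; simp
  rw [norm_mul] at h2
  simp only [RCLike.norm_conj] at h2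
  nlinarith [norm_nonneg (omg μ)]



structure MSt (S : Setup H) where
  used : Finset ℕ
  g : S.D

def cVal (n : ℕ) (u : Finset ℕ) : ℝ := (∑ j ∈ u, S.lam j) - ∑ i ∈ Finset.range n, S.d i


noncomputable def jPick (n : ℕ) (st : MSt S) : ℕ :=
  if cVal S n st.used < S.d n then
    sInf {j | j ∉ st.used ∧
      max (2*S.d n - cVal S n st.used)
        (2*S.d (n+1) - S.lam (sMin st.used) - cVal S n st.used + S.d n) ≤ S.lam j}
  else sMin st.used

lemma jPick_spec_L {n : ℕ} {st : MSt S} (h : cVal S n st.used < S.d n) :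
    jPick S n st ∉ st.used ∧
      max (2*S.d n - cVal S n st.used)
        (2*S.d (n+1) - S.lam (sMin st.used) - cVal S n st.used + S.d n)
        ≤ S.lam (jPick S n st) := by
  rw [jPick, if_pos h]
  have hne : {j | j ∉ st.used ∧
      max (2*S.d n - cVal S n st.used)
        (2*S.d (n+1) - S.lam (sMin st.used) - cVal S n st.used + S.d n) ≤ S.lam j}.Nonempty := by
    obtain ⟨j, h1, h2⟩ := exists_unused_large S st.used
      (max (2*S.d n - cVal S n st.used)
        (2*S.d (n+1) - S.lam (sMin st.used) - cVal S n st.used + S.d n))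
    exact ⟨j, h1, h2⟩
  exact Nat.sInf_mem hne

lemma jPick_spec_H {n : ℕ} {st : MSt S} (h : ¬ cVal S n st.used < S.d n) :
    jPick S n st = sMin st.used := by
  rw [jPick, if_neg h]

lemma jPick_not_mem (n : ℕ) (st : MSt S) : jPick S n st ∉ st.used := by
  by_cases h : cVal S n st.used < S.d n
  · exact (jPick_spec_L S h).1
  · rw [jPick_spec_H S h]; exact sMin_not_mem _

/-- key fact coming from the counting identity: if the carry value exceeds `d n`
then the smallest unused index has small lambda. -/
lemma lam_sMin_le {n : ℕ} {st : MSt S} (hcard : st.used.card = n + 1)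
    (hgt : S.d n < cVal S n st.used) : S.lam (sMin st.used) ≤ S.d n := by
  have hs : sMin st.used ≤ n + 1 := sMin_le_of_card hcard
  rcases Nat.lt_or_ge (sMin st.used) (n+1) with h | h
  · exact le_trans (S.hdom _) (S.hd (by omega))
  · have hseq : sMin st.used = n + 1 := le_antisymm hs h
    have hsub : Finset.range (n+1) ⊆ st.used := by
      intro k hk
      simp only [Finset.mem_range] at hk
      exact mem_of_lt_sMin (by omega)
    have hused : Finset.range (n+1) = st.used :=
      Finset.eq_of_subset_of_card_le hsub (by simp [hcard])
    exfalso
    have hc : cVal S n st.used = (∑ i ∈ Finset.range n, (S.lam i - S.d i)) + S.lam n := by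
      rw [cVal, ← hused, Finset.sum_range_succ]
      rw [Finset.sum_sub_distrib]
      ring
    have hle : (∑ i ∈ Finset.range n, (S.lam i - S.d i)) ≤ 0 := by
      apply Finset.sum_nonpos
      intro i _
      linarith [S.hdom i]
    have := S.hdom n
    linarith

noncomputable def betaSq (n : ℕ) (st : MSt S) : ℝ :=
  if S.lam (jPick S n st) = cVal S n st.used then 0
  else (S.d n - cVal S n st.used) / (S.lam (jPick S n st) - cVal S n st.used)

lemma betaSq_nonneg {n : ℕ} {st : MSt S} (hcard : st.used.card = n + 1) :
    0 ≤ betaSq S n st := by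
  rw [betaSq]
  split_ifs with h
  · exact le_refl 0
  · rcases lt_trichotomy (cVal S n st.used) (S.d n) with hc | hc | hc
    · have := (jPick_spec_L S hc).2
      have h1 : 2*S.d n - cVal S n st.used ≤ S.lam (jPick S n st) := le_trans (le_max_left _ _) this
      apply div_nonneg <;> linarith
    · rw [hc]; simp
    · have hj : jPick S n st = sMin st.used := jPick_spec_H S (by linarith)
      have hls : S.lam (sMin st.used) ≤ S.d n := lam_sMin_le S hcard hc
      rw [hj]
      apply div_nonneg_of_nonpos <;> linarith

lemma betaSq_le_one {n : ℕ} {st : MSt S} (hcard : st.used.card = n + 1) :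
    betaSq S n st ≤ 1 := by
  rw [betaSq]
  split_ifs with h
  · norm_num
  · rcases lt_trichotomy (cVal S n st.used) (S.d n) with hc | hc | hc
    · have := (jPick_spec_L S hc).2
      have h1 : 2*S.d n - cVal S n st.used ≤ S.lam (jPick S n st) := le_trans (le_max_left _ _) this
      rw [div_le_one (by linarith)]
      linarith
    · rw [hc]; simp
    · have hj : jPick S n st = sMin st.used := jPick_spec_H S (by linarith)
      have hls : S.lam (sMin st.used) ≤ S.d n := lam_sMin_le S hcard hc
      rw [hj] at h ⊢
      rw [div_le_one_iff]
      right; right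
      constructor <;> linarith

/-- the defining property : `(1-β²)c + β²λ = d n`. -/
lemma betaSq_combo {n : ℕ} {st : MSt S} (hcard : st.used.card = n + 1) :
    (1 - betaSq S n st) * cVal S n st.used + betaSq S n st * S.lam (jPick S n st)
      = S.d n := by
  rw [betaSq]
  split_ifs with h
  · -- λ_j = c forces c = d n
    rcases lt_trichotomy (cVal S n st.used) (S.d n) with hc | hc | hc
    · exfalso
      have := (jPick_spec_L S hc).2
      have h1 : 2*S.d n - cVal S n st.used ≤ S.lam (jPick S n st) := le_trans (le_max_left _ _) this
      linarith
    · simpa using hc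
    · exfalso
      have hj : jPick S n st = sMin st.used := jPick_spec_H S (by linarith)
      have hls : S.lam (sMin st.used) ≤ S.d n := lam_sMin_le S hcard hc
      rw [hj] at h
      linarith
  · have hne : S.lam (jPick S n st) - cVal S n st.used ≠ 0 := sub_ne_zero.mpr h
    field_simp
    ring


lemma betaSq_le_half {n : ℕ} {st : MSt S} (h : cVal S n st.used < S.d n) :
    betaSq S n st ≤ 1/2 := by
  have hspec := (jPick_spec_L S h).2
  have h1 : 2*S.d n - cVal S n st.used ≤ S.lam (jPick S n st) := le_trans (le_max_left _ _) hspec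
  rw [betaSq]
  split_ifs with he
  · norm_num
  · rw [div_le_iff₀ (by linarith)]
    linarith

lemma cVal_insert {n : ℕ} {st : MSt S} :
    cVal S (n+1) (insert (jPick S n st) st.used)
      = cVal S n st.used + S.lam (jPick S n st) - S.d n := by
  rw [cVal, cVal, Finset.sum_insert (jPick_not_mem S n st), Finset.sum_range_succ]
  ring

lemma cNext_ge {n : ℕ} {st : MSt S} (h : cVal S n st.used < S.d n)
    (hcard : st.used.card = n + 1) :
    S.d (n+1) ≤ cVal S (n+1) (insert (jPick S n st) st.used) := by
  have hspec := (jPick_spec_L S h).2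
  have h1 : 2*S.d (n+1) - S.lam (sMin st.used) - cVal S n st.used + S.d n
      ≤ S.lam (jPick S n st) := le_trans (le_max_right _ _) hspec
  have hs : sMin st.used ≤ n + 1 := sMin_le_of_card hcard
  have h2 : S.lam (sMin st.used) ≤ S.d (n+1) := le_trans (S.hdom _) (S.hd hs)
  rw [cVal_insert]
  linarith

lemma norm_eq_one_of_inner {x : H} (h : ⟪x, x⟫_ℂ = 1) : ‖x‖ = 1 := by
  have h2 := inner_self_eq_norm_sq_to_K (𝕜 := ℂ) x
  rw [h] at h2
  have h3 : (‖x‖ : ℂ)^2 = 1 := h2.symm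
  have h4 : (‖x‖:ℝ)^2 = 1 := by exact_mod_cast h3
  nlinarith [norm_nonneg x]

section TwoByTwo

variable (g fj : S.D) (α β : ℝ) (c lamj : ℝ)

noncomputable def eVec : S.D :=
  (α : ℂ) • g + ((β : ℂ) * omg (⟪(g : H), S.E fj⟫_ℂ)) • fj

noncomputable def gVec : S.D :=
  (-(β : ℂ)) • g + ((α : ℂ) * omg (⟪(g : H), S.E fj⟫_ℂ)) • fj

variable {g fj α β c lamj}
variable (hgn : ‖(g:H)‖ = 1) (hfn : ‖(fj:H)‖ = 1) (hgf : ⟪(g:H), (fj:H)⟫_ℂ = 0)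
  (h1 : α^2 + β^2 = 1)

omit h1 in
lemma inner_eVec_left (x : H) :
    ⟪(eVec S g fj α β : H), x⟫_ℂ
      = (α:ℂ) * ⟪(g:H), x⟫_ℂ
        + (starRingEnd ℂ) ((β:ℂ) * omg (⟪(g : H), S.E fj⟫_ℂ)) * ⟪(fj:H), x⟫_ℂ := by
  rw [eVec]
  push_cast [Submodule.coe_add, Submodule.coe_smul]
  rw [inner_add_left, inner_smul_left, inner_smul_left]
  simp [Complex.conj_ofReal]

omit h1 in
lemma inner_gVec_left (x : H) :
    ⟪(gVec S g fj α β : H), x⟫_ℂ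
      = (-β:ℂ) * ⟪(g:H), x⟫_ℂ
        + (starRingEnd ℂ) ((α:ℂ) * omg (⟪(g : H), S.E fj⟫_ℂ)) * ⟪(fj:H), x⟫_ℂ := by
  rw [gVec]
  push_cast [Submodule.coe_add, Submodule.coe_smul]
  rw [inner_add_left, inner_smul_left, inner_smul_left]
  simp [Complex.conj_ofReal]

omit h1 in
lemma inner_eVec_right (x : H) :
    ⟪x, (eVec S g fj α β : H)⟫_ℂ
      = (α:ℂ) * ⟪x, (g:H)⟫_ℂ + ((β:ℂ) * omg (⟪(g : H), S.E fj⟫_ℂ)) * ⟪x, (fj:H)⟫_ℂ := by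
  rw [eVec]
  push_cast [Submodule.coe_add, Submodule.coe_smul]
  rw [inner_add_right, inner_smul_right, inner_smul_right]

omit h1 in
lemma inner_gVec_right (x : H) :
    ⟪x, (gVec S g fj α β : H)⟫_ℂ
      = (-β:ℂ) * ⟪x, (g:H)⟫_ℂ + ((α:ℂ) * omg (⟪(g : H), S.E fj⟫_ℂ)) * ⟪x, (fj:H)⟫_ℂ := by
  rw [gVec]
  push_cast [Submodule.coe_add, Submodule.coe_smul]
  rw [inner_add_right, inner_smul_right, inner_smul_right]




omit hgn hfn h1 in
lemma inner_gg (hgn : ‖(g:H)‖ = 1) : ⟪(g:H), (g:H)⟫_ℂ = 1 := by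
  rw [inner_self_eq_norm_sq_to_K, hgn]; norm_num

omit hgn hfn hgf h1 in
lemma inner_fg (hgf : ⟪(g:H), (fj:H)⟫_ℂ = 0) : ⟪(fj:H), (g:H)⟫_ℂ = 0 := by
  rw [← inner_conj_symm, hgf]; simp

include hgn hfn hgf h1 in
lemma eVec_norm : ‖(eVec S g fj α β : H)‖ = 1 := by
  apply norm_eq_one_of_inner
  rw [inner_eVec_left, inner_eVec_right, inner_eVec_right,
    inner_gg S hgn, inner_gg S hfn, hgf, inner_fg S hgf]
  have h1c : (α:ℂ)^2 + (β:ℂ)^2 = 1 := by exact_mod_cast congrArg (Complex.ofReal) h1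
  simp only [map_mul, Complex.conj_ofReal]
  linear_combination ((β:ℂ)^2) * omg_conj_mul (⟪(g : H), S.E fj⟫_ℂ) + h1c

include hgn hfn hgf h1 in
lemma gVec_norm : ‖(gVec S g fj α β : H)‖ = 1 := by
  apply norm_eq_one_of_inner
  rw [inner_gVec_left, inner_gVec_right, inner_gVec_right,
    inner_gg S hgn, inner_gg S hfn, hgf, inner_fg S hgf]
  have h1c : (α:ℂ)^2 + (β:ℂ)^2 = 1 := by exact_mod_cast congrArg (Complex.ofReal) h1
  simp only [map_mul, Complex.conj_ofReal]
  linear_combination ((α:ℂ)^2) * omg_conj_mul (⟪(g : H), S.E fj⟫_ℂ) + h1c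

include hgn hfn hgf in
omit h1 in
lemma eVec_gVec : ⟪(eVec S g fj α β : H), (gVec S g fj α β : H)⟫_ℂ = 0 := by
  rw [inner_eVec_left, inner_gVec_right, inner_gVec_right,
    inner_gg S hgn, inner_gg S hfn, hgf, inner_fg S hgf]
  simp only [map_mul, Complex.conj_ofReal]
  linear_combination ((α:ℂ)*(β:ℂ)) * omg_conj_mul (⟪(g : H), S.E fj⟫_ℂ)

omit h1 in
lemma eVec_E : S.E (eVec S g fj α β)
    = (α:ℂ) • S.E g + ((β:ℂ) * omg (⟪(g : H), S.E fj⟫_ℂ)) • S.E fj := by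
  rw [eVec, map_add, map_smul, map_smul]

omit h1 in
lemma gVec_E : S.E (gVec S g fj α β)
    = (-(β:ℂ)) • S.E g + ((α:ℂ) * omg (⟪(g : H), S.E fj⟫_ℂ)) • S.E fj := by
  rw [gVec, map_add, map_smul, map_smul]

omit hgn hfn hgf in
include h1 in
lemma eVec_q (hc : ⟪(g:H), S.E g⟫_ℂ = (c:ℂ)) (hl : ⟪(fj:H), S.E fj⟫_ℂ = (lamj:ℂ)) :
    ⟪(eVec S g fj α β : H), S.E (eVec S g fj α β)⟫_ℂ = ((α^2*c + β^2*lamj : ℝ) : ℂ) := by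
  set μ := ⟪(g : H), S.E fj⟫_ℂ with hμ
  have hfe : ⟪(fj:H), S.E g⟫_ℂ = (starRingEnd ℂ) μ := by
    rw [← inner_conj_symm, S.hsym g fj]
  rw [inner_eVec_left, eVec_E, inner_add_right, inner_add_right,
    inner_smul_right, inner_smul_right, inner_smul_right, inner_smul_right,
    hc, hl, hfe, ← hμ]
  have hcross : omg μ * μ + (starRingEnd ℂ) (omg μ) * ((starRingEnd ℂ) μ) = 0 := by
    simpa [map_mul] using omg_cross μ
  have h1c : (α:ℂ)^2 + (β:ℂ)^2 = 1 := by exact_mod_cast congrArg (Complex.ofReal) h1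
  simp only [map_mul, Complex.conj_ofReal]
  push_cast
  linear_combination ((α:ℂ)*(β:ℂ)) * hcross + ((β:ℂ)^2 * (lamj:ℂ)) * omg_conj_mul μ


omit hgn hfn hgf in
include h1 in
lemma gVec_q (hc : ⟪(g:H), S.E g⟫_ℂ = (c:ℂ)) (hl : ⟪(fj:H), S.E fj⟫_ℂ = (lamj:ℂ)) :
    ⟪(gVec S g fj α β : H), S.E (gVec S g fj α β)⟫_ℂ = ((β^2*c + α^2*lamj : ℝ) : ℂ) := by
  set μ := ⟪(g : H), S.E fj⟫_ℂ with hμ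
  have hfe : ⟪(fj:H), S.E g⟫_ℂ = (starRingEnd ℂ) μ := by
    rw [← inner_conj_symm, S.hsym g fj]
  rw [inner_gVec_left, gVec_E, inner_add_right, inner_add_right,
    inner_smul_right, inner_smul_right, inner_smul_right, inner_smul_right,
    hc, hl, hfe, ← hμ]
  have hcross : omg μ * μ + (starRingEnd ℂ) (omg μ) * ((starRingEnd ℂ) μ) = 0 := by
    simpa [map_mul] using omg_cross μ
  have h1c : (α:ℂ)^2 + (β:ℂ)^2 = 1 := by exact_mod_cast congrArg (Complex.ofReal) h1
  simp only [map_mul, Complex.conj_ofReal]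
  push_cast
  linear_combination (-(α:ℂ)*(β:ℂ)) * hcross + ((α:ℂ)^2 * (lamj:ℂ)) * omg_conj_mul μ

include h1 in
lemma gVec_decomp : (g : H)
    = (α:ℂ) • (eVec S g fj α β : H) - (β:ℂ) • (gVec S g fj α β : H) := by
  rw [eVec, gVec]
  push_cast [Submodule.coe_add, Submodule.coe_smul]
  have h1c : (α:ℂ)^2 + (β:ℂ)^2 = 1 := by exact_mod_cast congrArg (Complex.ofReal) h1
  match_scalars
  · linear_combination -h1c
  · ring

include h1 in
lemma fVec_decomp : (fj : H)
    = ((β:ℂ) * (starRingEnd ℂ) (omg (⟪(g : H), S.E fj⟫_ℂ))) • (eVec S g fj α β : H)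
      + ((α:ℂ) * (starRingEnd ℂ) (omg (⟪(g : H), S.E fj⟫_ℂ))) • (gVec S g fj α β : H) := by
  rw [eVec, gVec]
  push_cast [Submodule.coe_add, Submodule.coe_smul]
  have h1c : (α:ℂ)^2 + (β:ℂ)^2 = 1 := by exact_mod_cast congrArg (Complex.ofReal) h1
  match_scalars
  · linear_combination (-(α:ℂ)^2-(β:ℂ)^2) * omg_conj_mul (⟪(g : H), S.E fj⟫_ℂ) - h1c
  · ring

end TwoByTwo


noncomputable def betaV (n : ℕ) (st : MSt S) : ℝ := Real.sqrt (betaSq S n st)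
noncomputable def alphaV (n : ℕ) (st : MSt S) : ℝ := Real.sqrt (1 - betaSq S n st)

noncomputable def chain : ℕ → MSt S
  | 0 => ⟨{0}, S.f 0⟩
  | n+1 => ⟨insert (jPick S n (chain n)) (chain n).used,
      gVec S (chain n).g (S.f (jPick S n (chain n))) (alphaV S n (chain n)) (betaV S n (chain n))⟩

noncomputable def eSeq (n : ℕ) : S.D :=
  eVec S (chain S n).g (S.f (jPick S n (chain S n))) (alphaV S n (chain S n)) (betaV S n (chain S n))

def spanE (n : ℕ) : Submodule ℂ H :=
  Submodule.span ℂ {x | ∃ i, i < n ∧ x = (eSeq S i : H)}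

lemma spanE_mono {n m : ℕ} (h : n ≤ m) : spanE S n ≤ spanE S m := by
  apply Submodule.span_mono
  rintro x ⟨i, hi, rfl⟩
  exact ⟨i, by omega, rfl⟩

lemma spanE_le_range (n : ℕ) :
    spanE S n ≤ Submodule.span ℂ (Set.range fun i => (eSeq S i : H)) := by
  apply Submodule.span_mono
  rintro x ⟨i, _, rfl⟩
  exact ⟨i, rfl⟩

structure Inv (n : ℕ) : Prop where
  card : (chain S n).used.card = n + 1
  gnorm : ‖((chain S n).g : H)‖ = 1
  gq : ⟪((chain S n).g : H), S.E (chain S n).g⟫_ℂ = (cVal S n (chain S n).used : ℂ)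
  gperp : ∀ j ∉ (chain S n).used, ⟪((chain S n).g : H), (S.f j : H)⟫_ℂ = 0
  gspan : ((chain S n).g : H) ∈ Submodule.span ℂ (Set.range fun i => (S.f i : H))
  enorm : ∀ i < n, ‖(eSeq S i : H)‖ = 1
  eperp : ∀ i k, i < k → k < n → ⟪(eSeq S i : H), (eSeq S k : H)⟫_ℂ = 0
  eg : ∀ i < n, ⟪(eSeq S i : H), ((chain S n).g : H)⟫_ℂ = 0
  ef : ∀ i < n, ∀ j ∉ (chain S n).used, ⟪(eSeq S i : H), (S.f j : H)⟫_ℂ = 0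
  eqd : ∀ i < n, ⟪(eSeq S i : H), S.E (eSeq S i)⟫_ℂ = (S.d i : ℂ)
  espan : ∀ i < n, (eSeq S i : H) ∈ Submodule.span ℂ (Set.range fun i => (S.f i : H))
  fdec : ∀ m ∈ (chain S n).used,
    (S.f m : H) - ⟪((chain S n).g : H), (S.f m : H)⟫_ℂ • ((chain S n).g : H) ∈ spanE S n

lemma inv_zero : Inv S 0 := by
  have h0 : chain S 0 = ⟨{0}, S.f 0⟩ := rfl
  constructor <;> try rw [h0]
  · simp
  · exact S.hf.1 0
  · rw [cVal]
    simpa using S.hfd 0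
  · intro j hj
    simp only [Finset.mem_singleton] at hj
    exact S.hf.2 (Ne.symm hj)
  · exact Submodule.subset_span ⟨0, rfl⟩
  · omega
  · omega
  · omega
  · omega
  · omega
  · omega
  · intro m hm
    simp only [Finset.mem_singleton] at hm
    subst hm
    have : ⟪(S.f 0 : H), (S.f 0 : H)⟫_ℂ = 1 := inner_gg S (S.hf.1 0)
    rw [this, one_smul, sub_self]
    exact Submodule.zero_mem _


lemma inv_step (n : ℕ) (hI : Inv S n) : Inv S (n+1) := by
  obtain ⟨hcard, hgnorm, hgq, hgperp, hgspan, henorm, heperp, heg, hef, heqd, hespan, hfdec⟩ := hI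
  have hch : chain S (n+1) = ⟨insert (jPick S n (chain S n)) (chain S n).used,
      gVec S (chain S n).g (S.f (jPick S n (chain S n))) (alphaV S n (chain S n))
        (betaV S n (chain S n))⟩ := rfl
  have heS : eSeq S n = eVec S (chain S n).g (S.f (jPick S n (chain S n)))
      (alphaV S n (chain S n)) (betaV S n (chain S n)) := rfl
  have hjne : jPick S n (chain S n) ∉ (chain S n).used := jPick_not_mem S n (chain S n)
  have hb2 : (betaV S n (chain S n))^2 = betaSq S n (chain S n) :=
    Real.sq_sqrt (betaSq_nonneg S hcard)
  have ha2 : (alphaV S n (chain S n))^2 = 1 - betaSq S n (chain S n) :=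
    Real.sq_sqrt (by linarith [betaSq_le_one S hcard])
  have hcombo := betaSq_combo S (st := chain S n) hcard
  have hcins := cVal_insert S (n := n) (st := chain S n)
  set j := jPick S n (chain S n) with hjdef
  set α := alphaV S n (chain S n) with hadef
  set β := betaV S n (chain S n) with hbdef
  set g := (chain S n).g with hgdef
  set u := (chain S n).used with hudef
  have h1 : α^2 + β^2 = 1 := by rw [hb2, ha2]; ring
  have hfn1 : ‖(S.f j : H)‖ = 1 := S.hf.1 _
  have hgf : ⟪(g:H), (S.f j:H)⟫_ℂ = 0 := hgperp _ hjne
  constructor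
  -- card
  · rw [hch]
    show (insert j u).card = n + 1 + 1
    rw [Finset.card_insert_of_notMem hjne, hcard]
  -- gnorm
  · rw [hch]
    exact gVec_norm S hgnorm hfn1 hgf h1
  -- gq
  · rw [hch]
    have hq := gVec_q S h1 hgq (S.hfd j)
    rw [hq]
    have hval : β^2 * cVal S n u + α^2 * S.lam j = cVal S (n+1) (insert j u) := by
      rw [hcins, hb2, ha2]
      linarith
    exact_mod_cast congrArg (fun r : ℝ => (r : ℂ)) hval
  -- gperp
  · intro m hm
    rw [hch] at hm ⊢
    simp only [Finset.mem_insert, not_or] at hm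
    rw [inner_gVec_left, hgperp m hm.2, S.hf.2 (fun h => hm.1 h.symm)]
    ring
  -- gspan
  · rw [hch]
    have hco : (gVec S g (S.f j) α β : H)
        = (-(β:ℂ)) • (g:H) + ((α:ℂ) * omg (⟪(g:H), S.E (S.f j)⟫_ℂ)) • (S.f j : H) := rfl
    rw [hco]
    exact add_mem (Submodule.smul_mem _ _ hgspan)
      (Submodule.smul_mem _ _ (Submodule.subset_span ⟨j, rfl⟩))
  -- enorm
  · intro i hi
    rcases Nat.lt_or_ge i n with h | h
    · exact henorm i h
    · have : i = n := by omega
      subst this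
      rw [heS]
      exact eVec_norm S hgnorm hfn1 hgf h1
  -- eperp
  · intro i k hik hk
    rcases Nat.lt_or_ge k n with h | h
    · exact heperp i k hik h
    · have : k = n := by omega
      subst this
      rw [heS, inner_eVec_right, heg i hik, hef i hik j hjne]
      ring
  -- eg
  · intro i hi
    rw [hch]
    rcases Nat.lt_or_ge i n with h | h
    · rw [inner_gVec_right, heg i h, hef i h j hjne]
      ring
    · have : i = n := by omega
      subst this
      rw [heS]
      exact eVec_gVec S hgnorm hfn1 hgf
  -- ef
  · intro i hi m hm
    rw [hch] at hm
    simp only [Finset.mem_insert, not_or] at hm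
    rcases Nat.lt_or_ge i n with h | h
    · exact hef i h m hm.2
    · have : i = n := by omega
      subst this
      rw [heS, inner_eVec_left, hgperp m hm.2, S.hf.2 (fun h => hm.1 h.symm)]
      ring
  -- eqd
  · intro i hi
    rcases Nat.lt_or_ge i n with h | h
    · exact heqd i h
    · have hin : i = n := by omega
      rw [hin, heS]
      have hq := eVec_q S h1 hgq (S.hfd j)
      rw [hq]
      have hval : α^2 * cVal S n u + β^2 * S.lam j = S.d n := by
        rw [hb2, ha2]
        linarith
      exact_mod_cast congrArg (fun r : ℝ => (r : ℂ)) hval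
  -- espan
  · intro i hi
    rcases Nat.lt_or_ge i n with h | h
    · exact hespan i h
    · have : i = n := by omega
      subst this
      rw [heS]
      have hco : (eVec S g (S.f j) α β : H)
          = ((α:ℂ)) • (g:H) + ((β:ℂ) * omg (⟪(g:H), S.E (S.f j)⟫_ℂ)) • (S.f j : H) := rfl
      rw [hco]
      exact add_mem (Submodule.smul_mem _ _ hgspan)
        (Submodule.smul_mem _ _ (Submodule.subset_span ⟨j, rfl⟩))
  -- fdec
  · intro m hm
    rw [hch] at hm ⊢
    simp only [Finset.mem_insert] at hm
    rcases hm with hmj0 | hm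
    · -- m = j
      rw [hmj0]
      have hE1 : ⟪(gVec S g (S.f j) α β : H), (S.f j : H)⟫_ℂ
          = (α:ℂ) * (starRingEnd ℂ) (omg (⟪(g:H), S.E (S.f j)⟫_ℂ)) := by
        rw [inner_gVec_left, hgf, inner_gg S hfn1]
        simp only [map_mul, Complex.conj_ofReal]
        ring
      rw [hE1]
      have hfd2 := fVec_decomp S (g := g) (fj := S.f j) (α := α) (β := β) h1
      have hkey : (S.f j : H)
            - ((α:ℂ) * (starRingEnd ℂ) (omg (⟪(g:H), S.E (S.f j)⟫_ℂ))) • (gVec S g (S.f j) α β : H)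
          = ((β:ℂ) * (starRingEnd ℂ) (omg (⟪(g:H), S.E (S.f j)⟫_ℂ))) • (eVec S g (S.f j) α β : H) := by
        conv_lhs => rw [hfd2]
        rw [add_sub_cancel_right]
      rw [hkey]
      exact Submodule.smul_mem _ _ (Submodule.subset_span ⟨n, by omega, by rw [heS]⟩)
    · -- m ∈ u
      have hmj : j ≠ m := fun h => hjne (h ▸ hm)
      have ht : ⟪(gVec S g (S.f j) α β : H), (S.f m : H)⟫_ℂ
          = (-(β:ℂ)) * ⟪(g:H), (S.f m:H)⟫_ℂ := by
        rw [inner_gVec_left, S.hf.2 hmj]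
        ring
      rw [ht]
      have hold := hfdec m hm
      have hgd := gVec_decomp S (g := g) (fj := S.f j) (α := α) (β := β) h1
      set t := ⟪(g:H), (S.f m:H)⟫_ℂ with htdef
      have hkey : (S.f m : H) - ((-(β:ℂ)) * t) • (gVec S g (S.f j) α β : H)
          = ((S.f m : H) - t • (g:H)) + (t * (α:ℂ)) • (eVec S g (S.f j) α β : H) := by
        conv_rhs => rw [hgd]
        module
      rw [hkey]
      exact add_mem (spanE_mono S (by omega) hold)
        (Submodule.smul_mem _ _ (Submodule.subset_span ⟨n, by omega, by rw [heS]⟩))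

lemma inv_all (n : ℕ) : Inv S n := by
  induction n with
  | zero => exact inv_zero S
  | succ n ih => exact inv_step S n ih


lemma used_mono : Monotone (fun n => (chain S n).used) := by
  apply monotone_nat_of_le_succ
  intro n
  exact Finset.subset_insert _ _

lemma sMin_eq_of {n m : ℕ} (hm : m ∉ (chain S n).used)
    (hall : ∀ m' < m, m' ∈ (chain S n).used) : sMin (chain S n).used = m := by
  refine le_antisymm (sMin_le hm) ?_
  by_contra h
  push_neg at h
  exact absurd (hall _ h) (sMin_not_mem _)

lemma mem_used_succ_of_H {n : ℕ} (h : ¬ cVal S n (chain S n).used < S.d n) :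
    sMin (chain S n).used ∈ (chain S (n+1)).used := by
  have : (chain S (n+1)).used = insert (jPick S n (chain S n)) (chain S n).used := rfl
  rw [this, jPick_spec_H S h]
  exact Finset.mem_insert_self _ _

lemma absorbed (m : ℕ) : ∃ N, m ∈ (chain S N).used := by
  induction m using Nat.strong_induction_on with
  | _ m IH =>
    classical
    have hN : ∃ N, ∀ m' < m, m' ∈ (chain S N).used := by
      choose Nf hNf using IH
      refine ⟨(Finset.range m).sup (fun m' => if h : m' < m then Nf m' h else 0), ?_⟩
      intro m' hm'
      have hle : Nf m' hm' ≤ (Finset.range m).sup (fun m' => if h : m' < m then Nf m' h else 0) := by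
        have := Finset.le_sup (f := fun m' => if h : m' < m then Nf m' h else 0)
          (Finset.mem_range.mpr hm')
        simpa [hm'] using this
      exact used_mono S hle (hNf m' hm')
    obtain ⟨N, hN⟩ := hN
    by_cases hm0 : m ∈ (chain S N).used
    · exact ⟨N, hm0⟩
    by_cases hm1 : m ∈ (chain S (N+1)).used
    · exact ⟨N+1, hm1⟩
    -- step N must be branch L
    have hsN : sMin (chain S N).used = m := sMin_eq_of S hm0 hN
    have hL : cVal S N (chain S N).used < S.d N := by
      by_contra h
      have := mem_used_succ_of_H S h
      rw [hsN] at this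
      exact hm1 this
    -- then carry is large at step N+1 and branch H consumes m
    have hge := cNext_ge S hL (inv_all S N).card
    have hH : ¬ cVal S (N+1) (chain S (N+1)).used < S.d (N+1) := by
      have : (chain S (N+1)).used = insert (jPick S N (chain S N)) (chain S N).used := rfl
      rw [this]
      exact not_lt.mpr hge
    have hmem := mem_used_succ_of_H S hH
    have hsN1 : sMin (chain S (N+1)).used = m := by
      refine sMin_eq_of S hm1 ?_
      intro m' hm'
      exact used_mono S (Nat.le_succ N) (hN m' hm')
    rw [hsN1] at hmem
    exact ⟨N+2, hmem⟩

lemma betaSq_eq_zero_of_eq {n : ℕ} {st : MSt S} (h : cVal S n st.used = S.d n) :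
    betaSq S n st = 0 := by
  rw [betaSq]
  split_ifs with hx
  · rfl
  · rw [h, sub_self, zero_div]

/-- there are infinitely many "good" steps with `betaSq ≤ 1/2`. -/
lemma exists_good (N : ℕ) : ∃ n, N ≤ n ∧ betaSq S n (chain S n) ≤ 1/2 := by
  by_contra hcon
  push_neg at hcon
  have hH : ∀ n, N ≤ n → S.d n < cVal S n (chain S n).used := by
    intro n hn
    rcases lt_trichotomy (cVal S n (chain S n).used) (S.d n) with h | h | h
    · exact absurd (betaSq_le_half S h) (not_le.mpr (hcon n hn))
    · exfalso
      have h0 := betaSq_eq_zero_of_eq S h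
      have h1 := hcon n hn
      rw [h0] at h1
      norm_num at h1
    · exact h
  have hdec : ∀ n, N ≤ n → cVal S (n+1) (chain S (n+1)).used ≤ cVal S n (chain S n).used := by
    intro n hn
    have h := hH n hn
    have hls : S.lam (sMin (chain S n).used) ≤ S.d n := lam_sMin_le S (inv_all S n).card h
    have hju : (chain S (n+1)).used = insert (jPick S n (chain S n)) (chain S n).used := rfl
    rw [hju, cVal_insert, jPick_spec_H S (not_lt.mpr h.le)]
    linarith
  have hchain : ∀ n, N ≤ n → cVal S n (chain S n).used ≤ cVal S N (chain S N).used := by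
    intro n hn
    induction n with
    | zero => simp_all
    | succ k ihk =>
      rcases Nat.lt_or_ge N (k+1) with h | h
      · have hk : N ≤ k := by omega
        exact le_trans (hdec k hk) (ihk hk)
      · have : N = k + 1 := by omega
        rw [this]
  obtain ⟨n₀, hn₀⟩ := exists_d_large S (cVal S N (chain S N).used)
  have h1 := hH (max n₀ N) (le_max_right _ _)
  have h2 := hchain (max n₀ N) (le_max_right _ _)
  have h3 : S.d n₀ ≤ S.d (max n₀ N) := S.hd (le_max_left _ _)
  linarith


lemma betaV_nonneg (n : ℕ) (st : MSt S) : 0 ≤ betaV S n st := Real.sqrt_nonneg _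

lemma betaV_le_one {n : ℕ} (hcard : (chain S n).used.card = n + 1) :
    betaV S n (chain S n) ≤ 1 := by
  rw [betaV]
  rw [show (1:ℝ) = Real.sqrt 1 by simp]
  exact Real.sqrt_le_sqrt (betaSq_le_one S hcard)

lemma T_succ {m n : ℕ} (hm : m ∈ (chain S n).used) :
    ‖⟪((chain S (n+1)).g : H), (S.f m : H)⟫_ℂ‖
      = betaV S n (chain S n) * ‖⟪((chain S n).g : H), (S.f m : H)⟫_ℂ‖ := by
  have hne : jPick S n (chain S n) ≠ m := fun h => (jPick_not_mem S n (chain S n)) (h ▸ hm)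
  have hg : (chain S (n+1)).g = gVec S (chain S n).g (S.f (jPick S n (chain S n)))
      (alphaV S n (chain S n)) (betaV S n (chain S n)) := rfl
  rw [hg, inner_gVec_left, S.hf.2 hne, mul_zero, add_zero, norm_mul, norm_neg]
  norm_num [Complex.norm_real, Real.norm_eq_abs, abs_of_nonneg (betaV_nonneg S n (chain S n))]

lemma T_le_one (m n : ℕ) : ‖⟪((chain S n).g : H), (S.f m : H)⟫_ℂ‖ ≤ 1 := by
  have := norm_inner_le_norm (𝕜 := ℂ) ((chain S n).g : H) (S.f m : H)
  rwa [(inv_all S n).gnorm, S.hf.1 m, one_mul] at this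

lemma T_mono {m n1 n2 : ℕ} (hm : m ∈ (chain S n1).used) (h : n1 ≤ n2) :
    ‖⟪((chain S n2).g : H), (S.f m : H)⟫_ℂ‖ ≤ ‖⟪((chain S n1).g : H), (S.f m : H)⟫_ℂ‖ := by
  induction n2, h using Nat.le_induction with
  | base => exact le_rfl
  | succ k hk ih =>
    have hmk : m ∈ (chain S k).used := used_mono S hk hm
    rw [T_succ S hmk]
    calc betaV S k (chain S k) * ‖⟪((chain S k).g : H), (S.f m : H)⟫_ℂ‖
        ≤ 1 * ‖⟪((chain S k).g : H), (S.f m : H)⟫_ℂ‖ := by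
          apply mul_le_mul_of_nonneg_right (betaV_le_one S (inv_all S k).card) (norm_nonneg _)
      _ = ‖⟪((chain S k).g : H), (S.f m : H)⟫_ℂ‖ := one_mul _
      _ ≤ _ := ih

lemma T_small {m n₀ : ℕ} (hm : m ∈ (chain S n₀).used) {ε : ℝ} (hε : 0 < ε) :
    ∃ n, n₀ ≤ n ∧ ‖⟪((chain S n).g : H), (S.f m : H)⟫_ℂ‖ < ε := by
  set r := Real.sqrt (1/2) with hr
  have hr0 : 0 ≤ r := Real.sqrt_nonneg _
  have hr1 : r < 1 := by
    rw [hr, show (1:ℝ) = Real.sqrt 1 by simp]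
    exact Real.sqrt_lt_sqrt (by norm_num) (by norm_num)
  have claim : ∀ k, ∃ n, n₀ ≤ n ∧ ‖⟪((chain S n).g : H), (S.f m : H)⟫_ℂ‖ ≤ r^k := by
    intro k
    induction k with
    | zero => exact ⟨n₀, le_rfl, by simpa using T_le_one S m n₀⟩
    | succ k ih =>
      obtain ⟨n, hn0, hTn⟩ := ih
      obtain ⟨n', hn'1, hn'2⟩ := exists_good S n
      have hmn' : m ∈ (chain S n').used := used_mono S (le_trans hn0 hn'1) hm
      refine ⟨n'+1, by omega, ?_⟩
      rw [T_succ S hmn']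
      have hb : betaV S n' (chain S n') ≤ r := by
        rw [betaV, hr]
        exact Real.sqrt_le_sqrt hn'2
      calc betaV S n' (chain S n') * ‖⟪((chain S n').g : H), (S.f m : H)⟫_ℂ‖
          ≤ r * ‖⟪((chain S n').g : H), (S.f m : H)⟫_ℂ‖ :=
            mul_le_mul_of_nonneg_right hb (norm_nonneg _)
        _ ≤ r * r^k := by
            apply mul_le_mul_of_nonneg_left _ hr0
            exact le_trans (T_mono S (used_mono S hn0 hm) hn'1) hTn
        _ = r^(k+1) := by ring
  obtain ⟨k, hk⟩ := exists_pow_lt_of_lt_one hε hr1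
  obtain ⟨n, hn0, hn⟩ := claim k
  exact ⟨n, hn0, lt_of_le_of_lt hn hk⟩

lemma f_mem_closure (m : ℕ) :
    (S.f m : H) ∈ (Submodule.span ℂ (Set.range fun i => (eSeq S i : H))).topologicalClosure := by
  obtain ⟨n₀, hm₀⟩ := absorbed S m
  show (S.f m : H) ∈ closure ((Submodule.span ℂ (Set.range fun i => (eSeq S i : H))) : Set H)
  rw [Metric.mem_closure_iff]
  intro ε hε
  obtain ⟨n, hn0, hTn⟩ := T_small S hm₀ hε
  have hmn : m ∈ (chain S n).used := used_mono S hn0 hm₀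
  have hdec := (inv_all S n).fdec m hmn
  refine ⟨(S.f m : H) - ⟪((chain S n).g : H), (S.f m : H)⟫_ℂ • ((chain S n).g : H), ?_, ?_⟩
  · exact SetLike.mem_coe.mpr (spanE_le_range S n hdec)
  · rw [dist_eq_norm, sub_sub_cancel, norm_smul, (inv_all S n).gnorm, mul_one]
    exact hTn



lemma eSeq_orthonormal : Orthonormal ℂ (fun i => (eSeq S i : H)) := by
  rw [orthonormal_iff_ite]
  intro i j
  show ⟪(eSeq S i : H), (eSeq S j : H)⟫_ℂ = _
  by_cases h : i = j
  · subst h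
    rw [if_pos rfl]
    exact inner_gg S ((inv_all S (i+1)).enorm i (by omega))
  · rw [if_neg h]
    rcases Nat.lt_or_ge i j with hij | hij
    · exact (inv_all S (j+1)).eperp i j hij (by omega)
    · have hji : j < i := by omega
      have h2 := (inv_all S (i+1)).eperp j i hji (by omega)
      rw [← inner_conj_symm, h2]
      simp

lemma eSeq_span (k : ℕ) :
    (eSeq S k : H) ∈ Submodule.span ℂ (Set.range fun i => (S.f i : H)) :=
  (inv_all S (k+1)).espan k (by omega)

lemma eSeq_q (i : ℕ) : ⟪(eSeq S i : H), S.E (eSeq S i)⟫_ℂ = (S.d i : ℂ) :=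
  (inv_all S (i+1)).eqd i (by omega)

lemma span_closure_eq :
    (Submodule.span ℂ (Set.range fun i => (eSeq S i : H))).topologicalClosure
      = (Submodule.span ℂ (Set.range fun i => (S.f i : H))).topologicalClosure := by
  apply le_antisymm
  · apply Submodule.topologicalClosure_mono
    rw [Submodule.span_le]
    rintro x ⟨i, rfl⟩
    exact eSeq_span S i
  · apply Submodule.topologicalClosure_minimal
    · rw [Submodule.span_le]
      rintro x ⟨i, rfl⟩
      exact SetLike.mem_coe.mpr (f_mem_closure S i)
    · exact Submodule.isClosed_topologicalClosure _

end StrongDom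

open scoped InnerProductSpace


/-- Strong domination lemma: $\{d_i\}, \{\lambda_i\}$ nondecreasing unbounded with
$d_i \ge \lambda_i$ for every $i$.  If the symmetric operator $E$ has diagonal
$\{\lambda_i\}$ w.r.t. an orthonormal sequence $\{f_i\}$ in its dense domain, then $E$
has diagonal $\{d_i\}$ w.r.t. an orthonormal sequence $\{e_i\}$ with the same closed
span, each $e_k$ in the algebraic span of the $f_i$. -/
theorem stmt_11 {H : Type*} [NormedAddCommGroup H] [InnerProductSpace ℂ H] [CompleteSpace H]
    (D : Submodule ℂ H) (hD : Dense (D : Set H)) (E : D →ₗ[ℂ] H)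
    (hsym : ∀ f g : D, ⟪E f, (g : H)⟫_ℂ = ⟪(f : H), E g⟫_ℂ)
    (d lam : ℕ → ℝ) (hd : Monotone d) (hlam : Monotone lam)
    (hdub : ¬ BddAbove (Set.range d)) (hlamub : ¬ BddAbove (Set.range lam))
    (hdom : ∀ i, lam i ≤ d i)
    (f : ℕ → D) (hf : Orthonormal ℂ fun i => (f i : H))
    (hfd : ∀ i, ⟪(f i : H), E (f i)⟫_ℂ = (lam i : ℂ)) :
    ∃ e : ℕ → D, Orthonormal ℂ (fun i => (e i : H)) ∧
      (∀ k, (e k : H) ∈ Submodule.span ℂ (Set.range fun i => (f i : H))) ∧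
      (Submodule.span ℂ (Set.range fun i => (e i : H))).topologicalClosure
        = (Submodule.span ℂ (Set.range fun i => (f i : H))).topologicalClosure ∧
      ∀ i, ⟪(e i : H), E (e i)⟫_ℂ = (d i : ℂ) := by
  let S : StrongDom.Setup H :=
    ⟨D, E, hsym, d, lam, hd, hlam, hdub, hlamub, hdom, f, hf, hfd⟩
  exact ⟨StrongDom.eSeq S, StrongDom.eSeq_orthonormal S, StrongDom.eSeq_span S,
    StrongDom.span_closure_eq S, StrongDom.eSeq_q S⟩
end

section
/- (Schur-type necessity) Let $E = \mathrm{diag}\,\boldsymbol{\lambda}$ be a self-adjoint operator with orthonormal eigenbasis $\{v_i\}_{i\in\mathbb{N}}$ and nondecreasing eigenvalue sequence $\{\lambda_i\}$, with domain $\mathcal{D} = \{f : \sum_i |\lambda_i|^2 |\langle f, v_i\rangle|^2 < \infty\}$. If $\{e_i\}_{i\in\mathbb{N}} \subset \mathcal{D}$ is any orthonormal basis and $d_i = \langle E e_i, e_i\rangle$, then $\sum_{i=1}^n \lambda_i \le \sum_{i=1}^n d_i$ for all $n \in \mathbb{N}$, and the same holds with $\{d_i\}$ replaced by its nondecreasing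 rearrangement. -/
open scoped InnerProductSpace

/-- Schur-type necessity: let $E = \mathrm{diag}\,\lambda$ be given by
$Ef = \sum_j \lambda_j \langle f, v_j\rangle v_j$ on its natural domain, where
$\{v_j\}$ is an orthonormal basis and $\{\lambda_j\}$ is nondecreasing.  If
$\{e_i\}$ is an orthonormal basis contained in the domain and
$d_i = \langle Ee_i, e_i\rangle$, then $\sum_{i<n}\lambda_i \le \sum_{i<n} d_i$ for
all $n$, and the same holds for any nondecreasing rearrangement of $\{d_i\}$. -/
theorem stmt_12 {H : Type*} [NormedAddCommGroup H] [InnerProductSpace ℂ H] [CompleteSpace H]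
    (v : ℕ → H) (hv : Orthonormal ℂ v)
    (hvtot : (Submodule.span ℂ (Set.range v)).topologicalClosure = ⊤)
    (lam : ℕ → ℝ) (hlam : Monotone lam)
    (e : ℕ → H) (he : Orthonormal ℂ e)
    (hetot : (Submodule.span ℂ (Set.range e)).topologicalClosure = ⊤)
    (hdom : ∀ i, Summable fun j => |lam j| ^ 2 * ‖⟪v j, e i⟫_ℂ‖ ^ 2)
    (d : ℕ → ℝ)
    (hd : ∀ i, (d i : ℂ) = ⟪e i, ∑' j, ((lam j : ℂ) * ⟪v j, e i⟫_ℂ) • v j⟫_ℂ) :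
    (∀ n, ∑ i ∈ Finset.range n, lam i ≤ ∑ i ∈ Finset.range n, d i) ∧
      ∀ σ : Equiv.Perm ℕ, Monotone (fun i => d (σ i)) →
        ∀ n, ∑ i ∈ Finset.range n, lam i ≤ ∑ i ∈ Finset.range n, d (σ i) := by
  classical
  set bv : HilbertBasis ℕ ℂ H := HilbertBasis.mk hv hvtot.ge with hbv
  set be : HilbertBasis ℕ ℂ H := HilbertBasis.mk he hetot.ge with hbe
  have hbvc : ∀ j, bv j = v j := fun j => by rw [hbv, HilbertBasis.coe_mk]
  have hbec : ∀ i, be i = e i := fun i => by rw [hbe, HilbertBasis.coe_mk]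
  set c : ℕ → ℕ → ℝ := fun i j => ‖⟪v j, e i⟫_ℂ‖ ^ 2 with hc
  have hc0 : ∀ i j, 0 ≤ c i j := fun i j => sq_nonneg _
  -- row sums: ∑_j c i j = 1
  have hrow : ∀ i, HasSum (fun j => c i j) 1 := by
    intro i
    have h := bv.hasSum_inner_mul_inner (e i) (e i)
    rw [← Complex.hasSum_ofReal]
    convert h using 2 with j
    · rfl
    · rw [hbvc, ← inner_conj_symm (e i) (v j), RCLike.conj_mul]
      norm_cast
    · simp [inner_self_eq_norm_sq_to_K, he.1 i]
  -- column sums: ∑_i c i j = 1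
  have hcol : ∀ j, HasSum (fun i => c i j) 1 := by
    intro j
    have h := be.hasSum_inner_mul_inner (v j) (v j)
    rw [← Complex.hasSum_ofReal]
    convert h using 2 with i
    · rfl
    · rw [hbec, ← inner_conj_symm (v j) (e i), RCLike.conj_mul]
      norm_cast
      simp [hc, norm_inner_symm (v j) (e i)]
    · simp [inner_self_eq_norm_sq_to_K, hv.1 j]
  -- d i = ∑_j lam j * c i j
  have hdi : ∀ i, HasSum (fun j => lam j * c i j) (d i) := by
    intro i
    have hmem : Memℓp (fun j => ((lam j : ℂ) * ⟪v j, e i⟫_ℂ)) 2 := by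
      apply memℓp_gen
      refine (hdom i).congr fun j => ?_
      rw [show (2 : ENNReal).toReal = ((2:ℕ):ℝ) by simp, Real.rpow_natCast,
        norm_mul, mul_pow, Complex.norm_real, Real.norm_eq_abs]
    set f : lp (fun _ : ℕ => ℂ) 2 := ⟨_, hmem⟩ with hf
    have hY : HasSum (fun j => ((lam j : ℂ) * ⟪v j, e i⟫_ℂ) • v j) (bv.repr.symm f) := by
      have := bv.hasSum_repr_symm f
      refine this.congr_fun fun j => ?_
      rw [hbvc]
    have hinner : HasSum (fun j => ⟪e i, ((lam j : ℂ) * ⟪v j, e i⟫_ℂ) • v j⟫_ℂ) ((d i : ℂ)) := by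
      have := hY.mapL (innerSL ℂ (e i))
      rwa [innerSL_apply_apply, ← hY.tsum_eq, ← hd i] at this
    rw [← Complex.hasSum_ofReal]
    refine hinner.congr_fun fun j => ?_
    rw [inner_smul_right, ← inner_conj_symm (v j) (e i), mul_assoc, RCLike.conj_mul]
    simp only [hc]
    push_cast
    rw [norm_inner_symm (v j) (e i)]
    push_cast
    rfl
  -- key lemma
  have key : ∀ (S : Finset ℕ) (n : ℕ), S.card = n →
      ∑ j ∈ Finset.range n, lam j ≤ ∑ i ∈ S, d i := by
    intro S n hcard
    set t : ℕ → ℝ := fun j => ∑ i ∈ S, c i j with ht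
    have htsum : HasSum t (n : ℝ) := by
      have h := hasSum_sum (s := S) (f := fun i j => c i j) (a := fun _ => (1 : ℝ))
        (fun i _ => hrow i)
      simpa [ht, hcard] using h
    have htle : ∀ j, t j ≤ 1 := fun j =>
      sum_le_hasSum S (fun i _ => hc0 i j) (hcol j)
    have ht0 : ∀ j, 0 ≤ t j := fun j => Finset.sum_nonneg fun i _ => hc0 i j
    have hlamt : HasSum (fun j => lam j * t j) (∑ i ∈ S, d i) := by
      have h := hasSum_sum (s := S) (f := fun i j => lam j * c i j) (a := d)
        (fun i _ => hdi i)
      refine h.congr_fun fun j => ?_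
      rw [ht]; simp [Finset.mul_sum]
    set μ := lam n with hμ
    have hg : HasSum (fun j => (lam j - μ) * t j) (∑ i ∈ S, d i - μ * n) := by
      have := hlamt.sub (htsum.mul_left μ)
      refine this.congr_fun fun j => by ring
    have h1 : ∑ j ∈ Finset.range n, (lam j - μ) * t j ≤ ∑ i ∈ S, d i - μ * n := by
      refine sum_le_hasSum _ (fun j hj => ?_) hg
      have hnj : n ≤ j := by simpa using hj
      exact mul_nonneg (sub_nonneg.2 (hlam hnj)) (ht0 j)
    have h2 : ∑ j ∈ Finset.range n, (lam j - μ) ≤ ∑ j ∈ Finset.range n, (lam j - μ) * t j := by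
      refine Finset.sum_le_sum fun j hj => ?_
      have hle : lam j - μ ≤ 0 :=
        sub_nonpos.2 (hlam (le_of_lt (Finset.mem_range.1 hj)))
      nlinarith [htle j, ht0 j]
    have heq : ∑ j ∈ Finset.range n, lam j
        = ∑ j ∈ Finset.range n, (lam j - μ) + μ * n := by
      rw [Finset.sum_sub_distrib]
      simp; ring
    rw [heq]
    have := add_le_add_right (le_trans h2 h1) (μ * n)
    linarith
  constructor
  · intro n
    simpa using key (Finset.range n) n (by simp)
  · intro σ _ n
    have hcard : ((Finset.range n).image σ).card = n := by
      rw [Finset.card_image_of_injective _ σ.injective, Finset.card_range]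
    have h := key ((Finset.range n).image σ) n hcard
    rwa [Finset.sum_image (fun a _ b _ hab => σ.injective hab)] at h
end

section
/- Let $\{\lambda_i\}$ and $\{d_i\}$ be nondecreasing sequences of positive reals with $\sum_{i=1}^n \lambda_i \le \sum_{i=1}^n d_i$ for all $n$. Then $\sum_{i=1}^n 1/d_i \le \sum_{i=1}^n 1/\lambda_i$ for all $n$. -/
lemma abel_aux (c a : ℕ → ℝ) (hc : Antitone c) (hc0 : ∀ i, 0 ≤ c i)
    (hS : ∀ n, 0 ≤ ∑ i ∈ Finset.range n, a i) :
    ∀ n, c n * ∑ i ∈ Finset.range n, a i ≤ ∑ i ∈ Finset.range n, c i * a i := by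
  intro n
  induction n with
  | zero => simp
  | succ n ih =>
    rw [Finset.sum_range_succ, Finset.sum_range_succ]
    have h1 : c (n+1) * (∑ i ∈ Finset.range n, a i + a n)
        ≤ c n * (∑ i ∈ Finset.range n, a i + a n) := by
      have := hS (n+1)
      rw [Finset.sum_range_succ] at this
      exact mul_le_mul_of_nonneg_right (hc (Nat.le_succ n)) this
    calc c (n+1) * (∑ i ∈ Finset.range n, a i + a n)
        ≤ c n * (∑ i ∈ Finset.range n, a i + a n) := h1
      _ = c n * ∑ i ∈ Finset.range n, a i + c n * a n := by ring
      _ ≤ ∑ i ∈ Finset.range n, c i * a i + c n * a n := by linarith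

/-- If $\{\lambda_i\}, \{d_i\}$ are nondecreasing positive sequences with
$\sum_{i<n}\lambda_i \le \sum_{i<n} d_i$ for all $n$, then
$\sum_{i<n} 1/d_i \le \sum_{i<n} 1/\lambda_i$ for all $n$. -/
theorem stmt_17 (lam d : ℕ → ℝ) (hlam : Monotone lam) (hd : Monotone d)
    (hlampos : ∀ i, 0 < lam i) (hdpos : ∀ i, 0 < d i)
    (hmaj : ∀ n, ∑ i ∈ Finset.range n, lam i ≤ ∑ i ∈ Finset.range n, d i) :
    ∀ n, ∑ i ∈ Finset.range n, 1 / d i ≤ ∑ i ∈ Finset.range n, 1 / lam i := by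
  intro n
  set c : ℕ → ℝ := fun i => (lam i * d i)⁻¹ with hcdef
  set a : ℕ → ℝ := fun i => d i - lam i with hadef
  have hc : Antitone c := by
    intro i j hij
    apply inv_anti₀ (mul_pos (hlampos i) (hdpos i))
    exact mul_le_mul (hlam hij) (hd hij) (hdpos i).le (hlampos j).le
  have hc0 : ∀ i, 0 ≤ c i := fun i => (inv_pos.mpr (mul_pos (hlampos i) (hdpos i))).le
  have hS : ∀ m, 0 ≤ ∑ i ∈ Finset.range m, a i := by
    intro m
    have := hmaj m
    simp only [hadef, Finset.sum_sub_distrib]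
    linarith
  have key := abel_aux c a hc hc0 hS n
  have hpos : 0 ≤ c n * ∑ i ∈ Finset.range n, a i := mul_nonneg (hc0 n) (hS n)
  have heq : ∀ i, c i * a i = 1 / lam i - 1 / d i := by
    intro i
    simp only [hcdef, hadef]
    field_simp [hcdef, hadef, (hlampos i).ne', (hdpos i).ne']
  have : 0 ≤ ∑ i ∈ Finset.range n, (1 / lam i - 1 / d i) := by
    calc (0:ℝ) ≤ c n * ∑ i ∈ Finset.range n, a i := hpos
      _ ≤ ∑ i ∈ Finset.range n, c i * a i := key
      _ = ∑ i ∈ Finset.range n, (1 / lam i - 1 / d i) := by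
          exact Finset.sum_congr rfl fun i _ => heq i
  rw [Finset.sum_sub_distrib] at this
  linarith
end
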